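/- arXiv:2203.00635 — 9 statements merged into one kernel-verified Lean document; each statement's English description precedes it below -/
import Mathlib

section
/- Let p, γ > 0, a > 0 and let m be a probability density function whose support is contained in [a, ∞) and which satisfies ∫_a^∞ θ^γ m(θ) dθ < ∞. Then for every u > 0, ∫_a^∞ g_{γ,p,θ^p}(u) m(θ) dθ ≤ V · g_{γ,p,a^p}(u), where V = a^{-γ} ∫_a^∞ θ^γ m(θ) dθ. -/
open MeasureTheory Set

/-- The generalized gamma density `g_{γ,p,θ}(u) = (p θ^(γ/p) / Γ(γ/p)) u^(γ-1) e^(-u^p θ)`. -/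
noncomputable def gg (γ p θ u : ℝ) : ℝ :=
  p * θ ^ (γ / p) / Real.Gamma (γ / p) * u ^ (γ - 1) * Real.exp (-(u ^ p * θ))

theorem ggsm_bound (γ p a : ℝ) (hγ : 0 < γ) (hp : 0 < p) (ha : 0 < a)
    (m : ℝ → ℝ) (hm_meas : Measurable m) (hm_nonneg : ∀ θ, 0 ≤ m θ)
    (hm_supp : ∀ θ, θ < a → m θ = 0)
    (hm_pdf : (∫ θ, m θ) = 1)
    (hm_int : IntegrableOn (fun θ => θ ^ γ * m θ) (Ioi a)) :
    ∀ u, 0 < u →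
      (∫ θ in Ioi a, gg γ p (θ ^ p) u * m θ) ≤
        (a ^ (-γ) * ∫ θ in Ioi a, θ ^ γ * m θ) * gg γ p (a ^ p) u := by
  intro u hu
  have hΓ : 0 < Real.Gamma (γ / p) := Real.Gamma_pos_of_pos (by positivity)
  have hrw : ∀ θ : ℝ, 0 < θ → (θ ^ p) ^ (γ / p) = θ ^ γ := by
    intro θ hθ
    rw [← Real.rpow_mul hθ.le, mul_comm p, div_mul_cancel₀ γ hp.ne']
  have key : ∀ θ ∈ Ioi a, gg γ p (θ ^ p) u * m θ ≤
      (a ^ (-γ) * gg γ p (a ^ p) u) * (θ ^ γ * m θ) := by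
    intro θ hθ
    have hθ0 : 0 < θ := ha.trans hθ
    have haθ : a ≤ θ := le_of_lt hθ
    unfold gg
    rw [hrw θ hθ0, hrw a ha]
    have hexp : Real.exp (-(u ^ p * θ ^ p)) ≤ Real.exp (-(u ^ p * a ^ p)) := by
      apply Real.exp_le_exp.2
      have h1 : a ^ p ≤ θ ^ p := Real.rpow_le_rpow ha.le haθ hp.le
      have h2 : (0:ℝ) ≤ u ^ p := Real.rpow_nonneg hu.le p
      nlinarith
    have haa : a ^ (-γ) * a ^ γ = 1 := by
      rw [← Real.rpow_add ha]; simp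
    have hθγ : (0:ℝ) ≤ θ ^ γ := Real.rpow_nonneg hθ0.le γ
    have huγ : (0:ℝ) ≤ u ^ (γ - 1) := Real.rpow_nonneg hu.le (γ - 1)
    calc p * θ ^ γ / Real.Gamma (γ / p) * u ^ (γ - 1) * Real.exp (-(u ^ p * θ ^ p)) * m θ
        ≤ p * θ ^ γ / Real.Gamma (γ / p) * u ^ (γ - 1) * Real.exp (-(u ^ p * a ^ p)) * m θ := by
          gcongr
          exact hm_nonneg θ
      _ = a ^ (-γ) * (p * a ^ γ / Real.Gamma (γ / p) * u ^ (γ - 1) *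
            Real.exp (-(u ^ p * a ^ p))) * (θ ^ γ * m θ) := by
          linear_combination (-(p / Real.Gamma (γ / p) * u ^ (γ - 1) *
            Real.exp (-(u ^ p * a ^ p)) * θ ^ γ * m θ)) * haa
  have ggnn : 0 ≤ a ^ (-γ) * gg γ p (a ^ p) u := by
    unfold gg
    have h1 : (0:ℝ) ≤ (a ^ p) ^ (γ / p) := Real.rpow_nonneg (Real.rpow_nonneg ha.le p) _
    have h2 : (0:ℝ) ≤ u ^ (γ - 1) := Real.rpow_nonneg hu.le _
    have h3 : (0:ℝ) ≤ a ^ (-γ) := Real.rpow_nonneg ha.le _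
    positivity
  have hgint : IntegrableOn
      (fun θ => (a ^ (-γ) * gg γ p (a ^ p) u) * (θ ^ γ * m θ)) (Ioi a) :=
    hm_int.const_mul _
  have hEq : (∫ θ in Ioi a, (a ^ (-γ) * gg γ p (a ^ p) u) * (θ ^ γ * m θ)) =
      (a ^ (-γ) * ∫ θ in Ioi a, θ ^ γ * m θ) * gg γ p (a ^ p) u := by
    rw [integral_const_mul]; ring
  rw [← hEq]
  refine integral_mono_of_nonneg ?_ hgint ?_
  · filter_upwards [self_mem_ae_restrict measurableSet_Ioi] with θ hθ
    have hθ0 : 0 < θ := ha.trans hθ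
    have h1 : 0 ≤ gg γ p (θ ^ p) u := by
      unfold gg
      have h1 : (0:ℝ) ≤ (θ ^ p) ^ (γ / p) := Real.rpow_nonneg (Real.rpow_nonneg hθ0.le p) _
      have h2 : (0:ℝ) ≤ u ^ (γ - 1) := Real.rpow_nonneg hu.le _
      positivity
    exact mul_nonneg h1 (hm_nonneg θ)
  · filter_upwards [self_mem_ae_restrict measurableSet_Ioi] with θ hθ
    exact key θ hθ
end

section
/- Let γ, p > 0, η > 1 and β < pγ. Then ∫_0^∞ G_γ(u^p (η-1)) e^{-u^p} u^{-1-β} du = (Γ(γ - β/p)/(p Γ(γ))) · ∫_{1/η}^1 (1-x)^{γ-1} x^{-β/p-1} dx. In particular, the incomplete gamma density f_{β,γ,p,η} integrates to 1 over (0, ∞). -/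
open MeasureTheory Set

/-- The scaled lower incomplete gamma function `G_γ(u) = (1/Γ(γ)) ∫_0^u x^(γ-1) e^(-x) dx`. -/
noncomputable def Gl (γ u : ℝ) : ℝ :=
  (1 / Real.Gamma γ) * ∫ x in (0:ℝ)..u, x ^ (γ - 1) * Real.exp (-x)

/-- `K*_{β,γ,p,η} = ∫_{1/η}^1 (1-x)^(γ-1) x^(-β/p-1) dx`. -/
noncomputable def Kstar (β γ p η : ℝ) : ℝ :=
  ∫ x in (1/η)..(1:ℝ), (1 - x) ^ (γ - 1) * x ^ (-β/p - 1)

/-- `K_{β,γ,p,η} = (Γ(γ-β/p)/(p Γ(γ))) K*_{β,γ,p,η}`. -/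
noncomputable def Kc (β γ p η : ℝ) : ℝ :=
  Real.Gamma (γ - β/p) / (p * Real.Gamma γ) * Kstar β γ p η

/-- The incomplete gamma density `f_{β,γ,p,η}(u)`. -/
noncomputable def figa (β γ p η u : ℝ) : ℝ :=
  (Kc β γ p η)⁻¹ * Gl γ (u ^ p * (η - 1)) * Real.exp (-(u ^ p)) * u ^ (-1 - β)

/-! Substituting `s = u ^ p` and `x = s t` in the incomplete gamma integral turns the left-hand
side into `(p Γ(γ))⁻¹ ∫_{s > 0} ∫_0^{η-1} s^(γ-β/p-1) t^(γ-1) e^(-(1+t)s) dt ds`. The integrand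
is nonnegative and integrable, so Fubini lets us integrate out `s` first, which produces
`Γ(γ-β/p) t^(γ-1) (1+t)^(-(γ-β/p))`; the substitution `t = 1/x - 1` then maps the remaining
integral onto `K*`. As `K* > 0`, dividing by `K` normalises the density. -/

open Real

lemma integral_comp_rpow_mul_rpow_Ioi (f : ℝ → ℝ) {p : ℝ} (hp : 0 < p) (β : ℝ) :
    ∫ u in Ioi (0:ℝ), f (u ^ p) * u ^ (-1 - β)
      = p⁻¹ * ∫ s in Ioi (0:ℝ), f s * s ^ (-1 - β / p) := by
  rw [← integral_comp_rpow_Ioi_of_pos hp (g := fun s => f s * s ^ (-1 - β / p)),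
    ← integral_const_mul]
  refine setIntegral_congr_fun measurableSet_Ioi fun u (hu : 0 < u) => ?_
  rw [smul_eq_mul, ← rpow_mul hu.le, show -1 - β = (p - 1) + p * (-1 - β / p) by field_simp; ring,
    rpow_add hu]
  field_simp

lemma integral_rpow_mul_exp_neg_comp_mul_left (γ : ℝ) {s c : ℝ} (hs : 0 < s) (hc : 0 ≤ c) :
    ∫ x in (0:ℝ)..s * c, x ^ (γ - 1) * exp (-x)
      = s ^ γ * ∫ t in Ioo 0 c, t ^ (γ - 1) * exp (-(s * t)) := by
  have h := intervalIntegral.smul_integral_comp_mul_left (fun x => x ^ (γ - 1) * exp (-x)) s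
    (a := 0) (b := c)
  rw [mul_zero] at h
  rw [← h, smul_eq_mul, intervalIntegral.integral_of_le hc, integral_Ioc_eq_integral_Ioo,
    ← integral_const_mul, ← integral_const_mul]
  refine setIntegral_congr_fun measurableSet_Ioo fun t ht => ?_
  rw [mul_rpow hs.le ht.1.le, show s ^ γ = s * s ^ (γ - 1) by
    rw [mul_comm, ← rpow_add_one hs.ne', sub_add_cancel]]
  ring

lemma Gl_mul_mul_exp_neg_mul_rpow (γ σ : ℝ) {s c : ℝ} (hs : 0 < s) (hc : 0 ≤ c) :
    Gl γ (s * c) * exp (-s) * s ^ (-1 - σ)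
      = (Gamma γ)⁻¹ * ∫ t in Ioo 0 c, s ^ (γ - σ - 1) * t ^ (γ - 1) * exp (-((1 + t) * s)) := by
  rw [Gl, integral_rpow_mul_exp_neg_comp_mul_left γ hs hc, one_div, mul_assoc, mul_assoc,
    mul_assoc, ← integral_mul_const, ← integral_const_mul]
  congr 1
  refine setIntegral_congr_fun measurableSet_Ioo fun t _ => ?_
  rw [show γ - σ - 1 = γ + (-1 - σ) by ring, rpow_add hs,
    show -((1 + t) * s) = -(s * t) + -s by ring, exp_add]
  ring

lemma integral_Ioi_rpow_mul_rpow_mul_exp_neg_one_add_mul {a : ℝ} (ha : 0 < a) (γ : ℝ) {t : ℝ}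
    (ht : 0 ≤ t) :
    ∫ s in Ioi 0, s ^ (a - 1) * t ^ (γ - 1) * exp (-((1 + t) * s))
      = Gamma a * (t ^ (γ - 1) * (1 + t) ^ (-a)) := by
  have h1t : 0 < 1 + t := by linarith
  simp_rw [mul_right_comm _ (t ^ (γ - 1))]
  rw [integral_mul_const, integral_rpow_mul_exp_neg_mul_Ioi ha h1t, one_div, inv_rpow h1t.le,
    ← rpow_neg h1t.le]
  ring

lemma intervalIntegrable_rpow_mul_one_add_rpow {γ : ℝ} (hγ : 0 < γ) (a : ℝ) {c : ℝ}
    (hc : 0 ≤ c) :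
    IntervalIntegrable (fun t => t ^ (γ - 1) * (1 + t) ^ (-a)) volume 0 c := by
  refine (intervalIntegral.intervalIntegrable_rpow' (by linarith)).mul_continuousOn ?_
  refine (continuous_const.add continuous_id).continuousOn.rpow_const fun t ht => Or.inl ?_
  rw [uIcc_of_le hc] at ht
  exact (add_pos_of_pos_of_nonneg one_pos ht.1).ne'

lemma integrable_rpow_mul_rpow_mul_exp_neg_one_add_mul {a γ c : ℝ} (ha : 0 < a) (hγ : 0 < γ)
    (hc : 0 ≤ c) :
    Integrable (Function.uncurry fun s t => s ^ (a - 1) * t ^ (γ - 1) * exp (-((1 + t) * s)))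
      ((volume.restrict (Ioi 0)).prod (volume.restrict (Ioo 0 c))) := by
  have hmeas : AEStronglyMeasurable
      (Function.uncurry fun s t => s ^ (a - 1) * t ^ (γ - 1) * exp (-((1 + t) * s)))
      ((volume.restrict (Ioi 0)).prod (volume.restrict (Ioo 0 c))) := by
    rw [Measure.prod_restrict]
    refine ContinuousOn.aestronglyMeasurable ?_ (measurableSet_Ioi.prod measurableSet_Ioo)
    refine ((continuous_fst.continuousOn.rpow_const fun q hq => Or.inl (ne_of_gt hq.1)).mul
      (continuous_snd.continuousOn.rpow_const fun q hq => Or.inl (ne_of_gt hq.2.1))).mul ?_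
    fun_prop
  rw [integrable_prod_iff' hmeas]
  constructor
  · filter_upwards [self_mem_ae_restrict measurableSet_Ioo] with t ht
    refine IntegrableOn.congr_fun ((integrableOn_rpow_mul_exp_neg_mul_rpow (s := a - 1)
      (by linarith) zero_lt_one (by linarith [ht.1] : 0 < 1 + t)).mul_const (t ^ (γ - 1)))
      (fun s _ => ?_) measurableSet_Ioi
    simp only [Function.uncurry_apply_pair, rpow_one, neg_mul]
    ring
  · refine (((intervalIntegrable_iff_integrableOn_Ioo_of_le hc).1
      (intervalIntegrable_rpow_mul_one_add_rpow hγ a hc)).const_mul (Gamma a)).congr ?_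
    filter_upwards [self_mem_ae_restrict measurableSet_Ioo] with t ht
    rw [← integral_Ioi_rpow_mul_rpow_mul_exp_neg_one_add_mul ha γ ht.1.le]
    refine setIntegral_congr_fun measurableSet_Ioi fun s (hs : 0 < s) => ?_
    have ht₀ : 0 < t := ht.1
    exact (norm_of_nonneg (by positivity)).symm

lemma integral_Ioi_integral_Ioo_rpow_mul_rpow_mul_exp {a γ c : ℝ} (ha : 0 < a) (hγ : 0 < γ)
    (hc : 0 ≤ c) :
    ∫ s in Ioi 0, ∫ t in Ioo 0 c, s ^ (a - 1) * t ^ (γ - 1) * exp (-((1 + t) * s))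
      = Gamma a * ∫ t in Ioo 0 c, t ^ (γ - 1) * (1 + t) ^ (-a) := by
  rw [integral_integral_swap (integrable_rpow_mul_rpow_mul_exp_neg_one_add_mul ha hγ hc),
    ← integral_const_mul]
  exact setIntegral_congr_fun measurableSet_Ioo fun t ht =>
    integral_Ioi_rpow_mul_rpow_mul_exp_neg_one_add_mul ha γ ht.1.le

lemma image_inv_sub_one_Ioo {η : ℝ} (hη : 1 < η) :
    (fun x : ℝ => x⁻¹ - 1) '' Ioo η⁻¹ 1 = Ioo 0 (η - 1) := by
  ext y
  simp only [mem_image, mem_Ioo]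
  constructor
  · rintro ⟨x, ⟨h1, h2⟩, rfl⟩
    have hx : 0 < x := lt_trans (by positivity) h1
    constructor
    · linarith [(one_lt_inv₀ hx).2 h2]
    · linarith [(inv_lt_comm₀ (by positivity) hx).1 h1]
  · rintro ⟨h1, h2⟩
    refine ⟨(1 + y)⁻¹, ⟨?_, ?_⟩, by simp⟩
    · exact inv_strictAnti₀ (by linarith) (by linarith)
    · exact inv_lt_one_of_one_lt₀ (by linarith)

lemma integral_one_sub_rpow_mul_rpow (γ σ : ℝ) {η : ℝ} (hη : 1 < η) :
    ∫ x in (1/η)..1, (1 - x) ^ (γ - 1) * x ^ (-σ - 1)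
      = ∫ t in Ioo 0 (η - 1), t ^ (γ - 1) * (1 + t) ^ (-(γ - σ)) := by
  have hη₀ : 0 < η := by linarith
  have hpos : ∀ x ∈ Ioo η⁻¹ 1, 0 < x := fun x hx => lt_trans (by positivity) hx.1
  have hderiv : ∀ x ∈ Ioo η⁻¹ 1,
      HasDerivWithinAt (fun x : ℝ => x⁻¹ - 1) (-(x ^ 2)⁻¹) (Ioo η⁻¹ 1) x := fun x hx =>
    ((hasDerivAt_inv (hpos x hx).ne').sub_const 1).hasDerivWithinAt
  have hinj : InjOn (fun x : ℝ => x⁻¹ - 1) (Ioo η⁻¹ 1) := fun x _ y _ h =>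
    inv_injective (sub_left_injective h)
  rw [← image_inv_sub_one_Ioo hη,
    integral_image_eq_integral_abs_deriv_smul measurableSet_Ioo hderiv hinj,
    intervalIntegral.integral_of_le (by rw [one_div]; exact (inv_lt_one_of_one_lt₀ hη).le),
    integral_Ioc_eq_integral_Ioo, one_div]
  refine setIntegral_congr_fun measurableSet_Ioo fun x hx => ?_
  have hx₀ := hpos x hx
  rw [abs_neg, abs_of_pos (by positivity), smul_eq_mul, add_sub_cancel,
    show x⁻¹ - 1 = (1 - x) * x⁻¹ by field_simp, mul_rpow (by linarith [hx.2]) (by positivity),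
    inv_rpow hx₀.le, inv_rpow hx₀.le, rpow_neg hx₀.le, inv_inv,
    show γ - σ = (γ - 1) + (-σ - 1) + (2:ℕ) by push_cast; ring, rpow_add hx₀, rpow_add hx₀,
    rpow_natCast]
  field_simp

lemma Kstar_pos (β : ℝ) {γ p η : ℝ} (hγ : 0 < γ) (hη : 1 < η) : 0 < Kstar β γ p η := by
  rw [Kstar, neg_div, integral_one_sub_rpow_mul_rpow γ (β / p) hη,
    ← integral_Ioc_eq_integral_Ioo, ← intervalIntegral.integral_of_le (by linarith)]
  refine intervalIntegral.intervalIntegral_pos_of_pos_on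
    (intervalIntegrable_rpow_mul_one_add_rpow hγ _ (by linarith)) (fun t ht => ?_) (by linarith)
  have ht₀ : 0 < t := ht.1
  positivity

lemma Kc_pos {β γ p η : ℝ} (hγ : 0 < γ) (hp : 0 < p) (hη : 1 < η) (hβ : β < p * γ) :
    0 < Kc β γ p η := by
  have hσ : 0 < γ - β / p := by rw [sub_pos, div_lt_iff₀ hp]; linarith
  have hKstar := Kstar_pos β (p := p) hγ hη
  have hΓσ := Gamma_pos_of_pos hσ
  have hΓγ := Gamma_pos_of_pos hγ
  rw [Kc]
  positivity

lemma integral_Gl_mul_exp_neg_rpow_mul_rpow {β γ p η : ℝ} (hγ : 0 < γ) (hp : 0 < p) (hη : 1 < η)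
    (hβ : β < p * γ) :
    ∫ u in Ioi (0:ℝ), Gl γ (u ^ p * (η - 1)) * exp (-(u ^ p)) * u ^ (-1 - β) = Kc β γ p η := by
  have hσ : 0 < γ - β / p := by rw [sub_pos, div_lt_iff₀ hp]; linarith
  have hη₁ : 0 ≤ η - 1 := by linarith
  rw [integral_comp_rpow_mul_rpow_Ioi (fun s => Gl γ (s * (η - 1)) * exp (-s)) hp β,
    setIntegral_congr_fun measurableSet_Ioi fun s (hs : 0 < s) =>
      Gl_mul_mul_exp_neg_mul_rpow γ (β / p) hs hη₁,
    integral_const_mul, integral_Ioi_integral_Ioo_rpow_mul_rpow_mul_exp hσ hγ hη₁, Kc, Kstar,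
    neg_div, integral_one_sub_rpow_mul_rpow γ (β / p) hη]
  field_simp

theorem iga_normalization (γ p η β : ℝ) (hγ : 0 < γ) (hp : 0 < p) (hη : 1 < η)
    (hβ : β < p * γ) :
    (∫ u in Ioi (0:ℝ), Gl γ (u ^ p * (η - 1)) * Real.exp (-(u ^ p)) * u ^ (-1 - β)) =
      Real.Gamma (γ - β / p) / (p * Real.Gamma γ) *
        ∫ x in (1/η)..(1:ℝ), (1 - x) ^ (γ - 1) * x ^ (-β/p - 1) ∧
    (∫ u in Ioi (0:ℝ), figa β γ p η u) = 1 := by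
  have hintegral := integral_Gl_mul_exp_neg_rpow_mul_rpow hγ hp hη hβ
  refine ⟨hintegral, ?_⟩
  simp only [figa, mul_assoc] at hintegral ⊢
  rw [integral_const_mul, hintegral, inv_mul_cancel₀ (Kc_pos hγ hp hη hβ).ne']
end

section
/- Let γ, p > 0, η > 1, β < pγ, and let W be a random variable with density f_{β,γ,p,η}. Then for every ξ > β - pγ, E[W^ξ] is finite and E[W^ξ] = K_{β-ξ,γ,p,η} / K_{β,γ,p,η}. -/
open MeasureTheory Set

/-! Since `Γ(γ) G_γ(u^p (η-1)) = u^{pγ} ∫_0^{η-1} t^{γ-1} e^{-u^p t} dt`, the unnormalised density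
`g_β(u) = G_γ(u^p (η-1)) e^{-u^p} u^{-1-β}` is the `t`-marginal (up to `Γ(γ)`) of
`t^{γ-1} u^{pγ-β-1} e^{-(1+t) u^p}` on `(0, ∞) × (0, η-1)`. Integrating out `u` first leaves
`Γ(γ-β/p)/p · t^{γ-1} (1+t)^{β/p-γ}`, and `x = 1/(1+t)` turns its integral into `K*`, so
`∫_0^∞ g_β = K_β` whenever `β < pγ`. As `u^ξ g_β = g_{β-ξ}`, the `ξ`-th moment is `K_{β-ξ}/K_β`. -/

open Real

lemma Gl_nonneg {γ v : ℝ} (hγ : 0 < γ) (hv : 0 ≤ v) : 0 ≤ Gl γ v :=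
  mul_nonneg (one_div_pos.2 (Gamma_pos_of_pos hγ)).le <|
    intervalIntegral.integral_nonneg hv fun _ hx => mul_nonneg (rpow_nonneg hx.1 _) (exp_nonneg _)

lemma continuous_Gl {γ : ℝ} (hγ : 0 < γ) : Continuous (Gl γ) :=
  continuous_const.mul <| intervalIntegral.continuous_primitive (fun _ _ =>
    (intervalIntegral.intervalIntegrable_rpow' (by linarith)).mul_continuousOn
      (continuous_exp.comp continuous_neg).continuousOn) 0

lemma Gamma_mul_Gl_mul {γ c a : ℝ} (hγ : 0 < γ) (hc : 0 < c) (ha : 0 ≤ a) :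
    Gamma γ * Gl γ (c * a) = c ^ γ * ∫ t in (0:ℝ)..a, t ^ (γ - 1) * exp (-(c * t)) := by
  have hscale := intervalIntegral.smul_integral_comp_mul_left
    (fun x => x ^ (γ - 1) * exp (-x)) c (a := 0) (b := a)
  rw [mul_zero, smul_eq_mul] at hscale
  rw [Gl, ← mul_assoc, mul_one_div_cancel (Gamma_pos_of_pos hγ).ne', one_mul, ← hscale,
    ← intervalIntegral.integral_const_mul, ← intervalIntegral.integral_const_mul]
  refine intervalIntegral.integral_congr fun t ht => ?_
  rw [uIcc_of_le ha] at ht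
  rw [mul_rpow hc.le ht.1, show c ^ γ = c * c ^ (γ - 1) by
    rw [← rpow_one_add' hc.le (by linarith)]; ring_nf]
  ring

lemma inv_sq_mul_one_sub_inv_rpow_mul_inv_rpow {t : ℝ} (ht : 0 ≤ t) (a b : ℝ) :
    ((1 + t) ^ 2)⁻¹ * ((1 - (1 + t)⁻¹) ^ a * ((1 + t)⁻¹) ^ b)
      = t ^ a * (1 + t) ^ (-(a + b + 2)) := by
  have h1t : 0 < 1 + t := by linarith
  rw [show 1 - (1 + t)⁻¹ = t / (1 + t) by field_simp; ring, div_rpow ht h1t.le, inv_rpow h1t.le,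
    ← rpow_natCast, ← rpow_neg h1t.le, div_eq_mul_inv, ← rpow_neg h1t.le, ← rpow_neg h1t.le]
  have hexp : (1 + t) ^ (-((2:ℕ):ℝ)) * ((1 + t) ^ (-a) * (1 + t) ^ (-b))
      = (1 + t) ^ (-(a + b + 2)) := by
    rw [← rpow_add h1t, ← rpow_add h1t]; congr 1; push_cast; ring
  rw [← hexp]; ring

lemma integral_rpow_mul_one_add_rpow_eq_Kstar {β γ p η : ℝ} (hη : 1 < η) :
    ∫ t in Ioo 0 (η - 1), t ^ (γ - 1) * (1 + t) ^ (β / p - γ) = Kstar β γ p η := by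
  have hsubst := integral_Icc_deriv_smul_of_deriv_nonpos (a := 0) (b := η - 1)
    (f := fun t => (1 + t)⁻¹) (f' := fun t => -((1 + t) ^ 2)⁻¹)
    (g := fun x => (1 - x) ^ (γ - 1) * x ^ (-β / p - 1))
    (fun t ht => (continuousAt_const.add continuousAt_id).continuousWithinAt.inv₀
      (show (1:ℝ) + t ≠ 0 by linarith [ht.1]))
    (fun t ht => (((hasDerivAt_id' t).const_add 1).inv
      (show (1:ℝ) + t ≠ 0 by linarith [ht.1])).congr_deriv (by ring))
    (fun t _ => by simp only [Left.neg_nonpos_iff]; positivity) (by linarith)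
  simp only [add_zero, inv_one, add_sub_cancel] at hsubst
  rw [Kstar, intervalIntegral.integral_of_le (by rw [one_div]; exact inv_le_one_of_one_le₀ hη.le),
    ← integral_Icc_eq_integral_Ioc, one_div, ← neg_neg (∫ x in Icc η⁻¹ 1, _), ← hsubst,
    ← integral_neg, ← integral_Icc_eq_integral_Ioo]
  refine setIntegral_congr_fun measurableSet_Icc fun t ht => ?_
  rw [smul_eq_mul, neg_mul, neg_neg, inv_sq_mul_one_sub_inv_rpow_mul_inv_rpow ht.1]
  ring_nf

noncomputable def igaKernel (β γ p η u : ℝ) : ℝ :=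
  Gl γ (u ^ p * (η - 1)) * exp (-(u ^ p)) * u ^ (-1 - β)

noncomputable def igaJoint (β γ p u t : ℝ) : ℝ :=
  t ^ (γ - 1) * (u ^ (p * γ - β - 1) * exp (-(1 + t) * u ^ p))

section Kernel

variable {β γ p η : ℝ}

lemma figa_eq_inv_mul_igaKernel (u : ℝ) :
    figa β γ p η u = (Kc β γ p η)⁻¹ * igaKernel β γ p η u := by
  rw [figa, igaKernel]; ring

lemma igaKernel_nonneg (hγ : 0 < γ) (hη : 1 < η) {u : ℝ} (hu : 0 < u) :
    0 ≤ igaKernel β γ p η u :=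
  mul_nonneg (mul_nonneg (Gl_nonneg hγ (mul_nonneg (rpow_nonneg hu.le _) (by linarith)))
    (exp_nonneg _)) (rpow_nonneg hu.le _)

lemma measurable_igaKernel (hγ : 0 < γ) : Measurable (igaKernel β γ p η) := by
  have := (continuous_Gl hγ).measurable
  unfold igaKernel
  fun_prop

lemma rpow_mul_igaKernel (ξ : ℝ) {u : ℝ} (hu : 0 < u) :
    u ^ ξ * igaKernel β γ p η u = igaKernel (β - ξ) γ p η u := by
  rw [igaKernel, igaKernel, show -1 - (β - ξ) = ξ + (-1 - β) by ring, rpow_add hu]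
  ring

lemma Gamma_mul_igaKernel (hγ : 0 < γ) (hη : 1 < η) {u : ℝ} (hu : 0 < u) :
    Gamma γ * igaKernel β γ p η u = ∫ t in Ioo 0 (η - 1), igaJoint β γ p u t := by
  have hup : 0 < u ^ p := rpow_pos_of_pos hu p
  rw [igaKernel, ← mul_assoc, ← mul_assoc, Gamma_mul_Gl_mul hγ hup (by linarith),
    intervalIntegral.integral_of_le (by linarith), integral_Ioc_eq_integral_Ioo,
    ← integral_const_mul, ← integral_mul_const, ← integral_mul_const]
  refine setIntegral_congr_fun measurableSet_Ioo fun t _ => ?_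
  rw [igaJoint, show -(1 + t) * u ^ p = -(u ^ p * t) + -(u ^ p) by ring, exp_add,
    show u ^ (p * γ - β - 1) = (u ^ p) ^ γ * u ^ (-1 - β) by
      rw [← rpow_mul hu.le, ← rpow_add hu]; ring_nf]
  ring

lemma integrableOn_igaJoint_Ioi (hp : 0 < p) (hβ : β < p * γ) {t : ℝ} (ht : 0 < t) :
    IntegrableOn (fun u => igaJoint β γ p u t) (Ioi 0) :=
  (integrableOn_rpow_mul_exp_neg_mul_rpow (by linarith) hp (by linarith)).const_mul _

lemma integral_igaJoint_Ioi (hp : 0 < p) (hβ : β < p * γ) {t : ℝ} (ht : 0 < t) :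
    ∫ u in Ioi 0, igaJoint β γ p u t
      = Gamma (γ - β / p) / p * (t ^ (γ - 1) * (1 + t) ^ (β / p - γ)) := by
  simp only [igaJoint]
  rw [integral_const_mul, integral_rpow_mul_exp_neg_mul_rpow hp (by linarith) (by linarith),
    show (p * γ - β - 1 + 1) / p = γ - β / p by field_simp; ring,
    show -(p * γ - β - 1 + 1) / p = β / p - γ by field_simp; ring]
  ring

lemma integrableOn_rpow_mul_one_add_rpow_Ioo (hγ : 0 < γ) {a : ℝ} (ha : 0 ≤ a) (s : ℝ) :
    IntegrableOn (fun t : ℝ => t ^ (γ - 1) * (1 + t) ^ s) (Ioo 0 a) := by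
  rw [← intervalIntegrable_iff_integrableOn_Ioo_of_le ha]
  refine (intervalIntegral.intervalIntegrable_rpow' (by linarith)).mul_continuousOn
    ((continuous_const.add continuous_id).continuousOn.rpow_const fun t ht => Or.inl ?_)
  rw [uIcc_of_le ha] at ht
  exact (show (0:ℝ) < 1 + t by linarith [ht.1]).ne'

lemma integrable_igaJoint (hγ : 0 < γ) (hp : 0 < p) (hη : 1 < η) (hβ : β < p * γ) :
    Integrable (Function.uncurry (igaJoint β γ p))
      ((volume.restrict (Ioi 0)).prod (volume.restrict (Ioo 0 (η - 1)))) := by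
  have hmeas : Measurable (Function.uncurry (igaJoint β γ p)) := by
    unfold Function.uncurry igaJoint
    fun_prop
  refine (integrable_prod_iff' hmeas.aestronglyMeasurable).2 ⟨?_, ?_⟩
  · filter_upwards [ae_restrict_mem measurableSet_Ioo] with t ht
    exact integrableOn_igaJoint_Ioi hp hβ ht.1
  · refine IntegrableOn.congr_fun ((integrableOn_rpow_mul_one_add_rpow_Ioo hγ
      (show 0 ≤ η - 1 by linarith) (β / p - γ)).const_mul (Gamma (γ - β / p) / p))
      (fun t ht => ?_) measurableSet_Ioo
    rw [← integral_igaJoint_Ioi hp hβ ht.1]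
    refine setIntegral_congr_fun measurableSet_Ioi fun u hu => (Real.norm_of_nonneg ?_).symm
    exact mul_nonneg (rpow_nonneg ht.1.le _)
      (mul_nonneg (rpow_nonneg (le_of_lt hu) _) (exp_nonneg _))

lemma integrableOn_igaKernel (hγ : 0 < γ) (hp : 0 < p) (hη : 1 < η) (hβ : β < p * γ) :
    IntegrableOn (igaKernel β γ p η) (Ioi 0) :=
  IntegrableOn.congr_fun
    ((integrable_igaJoint hγ hp hη hβ).integral_prod_left.const_mul (Gamma γ)⁻¹)
    (fun u hu => by
      simp only [Function.uncurry_apply_pair]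
      rw [← Gamma_mul_igaKernel hγ hη hu, inv_mul_cancel_left₀ (Gamma_pos_of_pos hγ).ne'])
    measurableSet_Ioi

lemma integral_igaKernel (hγ : 0 < γ) (hp : 0 < p) (hη : 1 < η) (hβ : β < p * γ) :
    ∫ u in Ioi 0, igaKernel β γ p η u = Kc β γ p η := by
  have hΓ : Gamma γ ≠ 0 := (Gamma_pos_of_pos hγ).ne'
  calc ∫ u in Ioi 0, igaKernel β γ p η u
      = (Gamma γ)⁻¹ * ∫ u in Ioi 0, ∫ t in Ioo 0 (η - 1), igaJoint β γ p u t := by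
        rw [← integral_const_mul]
        refine setIntegral_congr_fun measurableSet_Ioi fun u hu => ?_
        rw [← Gamma_mul_igaKernel hγ hη hu, inv_mul_cancel_left₀ hΓ]
    _ = (Gamma γ)⁻¹ * ∫ t in Ioo 0 (η - 1), ∫ u in Ioi 0, igaJoint β γ p u t := by
        rw [integral_integral_swap (integrable_igaJoint hγ hp hη hβ)]
    _ = (Gamma γ)⁻¹ * ∫ t in Ioo 0 (η - 1),
          Gamma (γ - β / p) / p * (t ^ (γ - 1) * (1 + t) ^ (β / p - γ)) := by
        rw [setIntegral_congr_fun measurableSet_Ioo fun t ht => integral_igaJoint_Ioi hp hβ ht.1]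
    _ = Kc β γ p η := by
        rw [integral_const_mul, integral_rpow_mul_one_add_rpow_eq_Kstar hη, Kc]
        field_simp

lemma Kc_nonneg (hγ : 0 < γ) (hp : 0 < p) (hη : 1 < η) (hβ : β < p * γ) : 0 ≤ Kc β γ p η :=
  integral_igaKernel hγ hp hη hβ ▸
    setIntegral_nonneg measurableSet_Ioi fun _ hu => igaKernel_nonneg hγ hη hu

lemma ite_pos_figa_eq_indicator (u : ℝ) :
    (if 0 < u then figa β γ p η u else 0)
      = (Ioi 0).indicator (fun u => (Kc β γ p η)⁻¹ * igaKernel β γ p η u) u := by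
  simp only [indicator, mem_Ioi, figa_eq_inv_mul_igaKernel]

lemma indicator_mul_igaKernel_mul_rpow (c ξ u : ℝ) :
    (Ioi 0).indicator (fun u => c * igaKernel β γ p η u) u * u ^ ξ
      = (Ioi 0).indicator (fun u => c * igaKernel (β - ξ) γ p η u) u := by
  by_cases hu : 0 < u
  · simp only [indicator_of_mem (mem_Ioi.2 hu), ← rpow_mul_igaKernel ξ hu]
    ring
  · simp [indicator_of_notMem (mt mem_Ioi.1 hu)]

end Kernel

lemma integrable_comp_and_integral_comp_of_map_eq_withDensity {Ω α : Type*} [MeasurableSpace Ω]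
    [MeasurableSpace α] {μ : Measure Ω} {ν : Measure α} {W : Ω → α} (hW : Measurable W)
    {d g : α → ℝ} (hd : AEMeasurable d ν) (hd_nonneg : 0 ≤ᵐ[ν] d) (hg : Measurable g)
    (hdist : μ.map W = ν.withDensity fun x => ENNReal.ofReal (d x))
    (hdg : Integrable (fun x => d x * g x) ν) :
    Integrable (fun ω => g (W ω)) μ ∧ ∫ ω, g (W ω) ∂μ = ∫ x, d x * g x ∂ν := by
  have hd' : AEMeasurable (fun x => ENNReal.ofReal (d x)) ν :=
    ENNReal.measurable_ofReal.comp_aemeasurable hd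
  have hfin : ∀ᵐ x ∂ν, ENNReal.ofReal (d x) < ⊤ := ae_of_all _ fun _ => ENNReal.ofReal_lt_top
  have hsmul : (fun x => (ENNReal.ofReal (d x)).toReal • g x) =ᵐ[ν] fun x => d x * g x := by
    filter_upwards [hd_nonneg] with x hx
    rw [ENNReal.toReal_ofReal hx, smul_eq_mul]
  constructor
  · refine (integrable_map_measure hg.aestronglyMeasurable hW.aemeasurable).1 ?_
    rw [hdist, integrable_withDensity_iff_integrable_smul₀' hd' hfin]
    exact hdg.congr hsmul.symm
  · rw [← integral_map hW.aemeasurable hg.aestronglyMeasurable, hdist,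
      integral_withDensity_eq_integral_toReal_smul₀ hd' hfin]
    exact integral_congr_ae hsmul

theorem iga_moments_general {Ω : Type*} [MeasurableSpace Ω] (μ : Measure Ω)
    (γ p η β ξ : ℝ) (hγ : 0 < γ) (hp : 0 < p) (hη : 1 < η) (hβ : β < p * γ)
    (W : Ω → ℝ) (hW : Measurable W)
    (hdist : Measure.map W μ =
      MeasureTheory.volume.withDensity
        (fun u => ENNReal.ofReal (if 0 < u then figa β γ p η u else 0)))
    (hξ : β - p * γ < ξ) :
    Integrable (fun ω => W ω ^ ξ) μ ∧
      (∫ ω, W ω ^ ξ ∂μ) = Kc (β - ξ) γ p η / Kc β γ p η := by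
  have hβξ : β - ξ < p * γ := by linarith
  simp only [ite_pos_figa_eq_indicator] at hdist
  obtain ⟨hint, hval⟩ := integrable_comp_and_integral_comp_of_map_eq_withDensity
    (g := fun u => u ^ ξ) hW
    (((measurable_igaKernel hγ).const_mul _).indicator measurableSet_Ioi).aemeasurable
    (ae_of_all _ (indicator_nonneg fun u hu =>
      mul_nonneg (inv_nonneg.2 (Kc_nonneg hγ hp hη hβ)) (igaKernel_nonneg hγ hη hu)))
    (by fun_prop) hdist
    (by simp only [indicator_mul_igaKernel_mul_rpow]
        exact IntegrableOn.integrable_indicator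
          ((integrableOn_igaKernel hγ hp hη hβξ).const_mul _) measurableSet_Ioi)
  refine ⟨hint, hval.trans ?_⟩
  simp only [indicator_mul_igaKernel_mul_rpow]
  rw [integral_indicator measurableSet_Ioi, integral_const_mul,
    integral_igaKernel hγ hp hη hβξ, div_eq_inv_mul]

theorem iga_moments {Ω : Type*} [MeasurableSpace Ω] (μ : Measure Ω) [IsProbabilityMeasure μ]
    (γ p η β ξ : ℝ) (hγ : 0 < γ) (hp : 0 < p) (hη : 1 < η) (hβ : β < p * γ)
    (W : Ω → ℝ) (hW : Measurable W)
    (hdist : Measure.map W μ =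
      MeasureTheory.volume.withDensity
        (fun u => ENNReal.ofReal (if 0 < u then figa β γ p η u else 0)))
    (hξ : β - p * γ < ξ) :
    Integrable (fun ω => W ω ^ ξ) μ ∧
      (∫ ω, W ω ^ ξ ∂μ) = Kc (β - ξ) γ p η / Kc β γ p η :=
  iga_moments_general μ γ p η β ξ hγ hp hη hβ W hW hdist hξ
end

section
/- Let γ, p > 0, η > 1 and β < pγ. Then for every u > 0, f_{β,γ,p,η}(u) = ∫_1^{η^{1/p}} g_{(pγ-β),p,θ^p}(u) m_{β,γ,p,η}(θ) dθ, where m_{β,γ,p,η}(θ) = (p / K*_{β,γ,p,η}) (θ^p - 1)^{γ-1} θ^{p+β-pγ-1} for 1 < θ < η^{1/p}. In other words, the incomplete gamma distribution is a generalized gamma scale mixture with mixing density m_{β,γ,p,η}. -/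
open MeasureTheory Set

/-- The mixing density `m_{β,γ,p,η}(θ) = (p / K*_{β,γ,p,η}) (θ^p - 1)^(γ-1) θ^(p+β-pγ-1)`
for `1 < θ < η^(1/p)`. -/
noncomputable def mdens (β γ p η θ : ℝ) : ℝ :=
  p / Kstar β γ p η * (θ ^ p - 1) ^ (γ - 1) * θ ^ (p + β - p * γ - 1)

/-!
The substitution `x = u^p (θ^p - 1)` turns the incomplete gamma integral
`∫_0^{u^p(η-1)} x^(γ-1) e^(-x) dx` into
`p u^(pγ) e^(u^p) ∫_1^{η^(1/p)} θ^(p-1) (θ^p-1)^(γ-1) e^(-u^p θ^p) dθ`.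
The product of the generalized gamma density at scale `θ^p` with the mixing density has exactly
this dependence on `θ`, so both sides of the mixture identity agree up to constants, which match.
-/

open Real

theorem integral_comp_mul_rpow_sub_one {p c A : ℝ} (hp : 0 ≤ p) (hc : 0 ≤ c) (hA : 0 < A)
    (g : ℝ → ℝ) :
    ∫ θ in (1:ℝ)..A, g (c * (θ ^ p - 1)) * (c * (p * θ ^ (p - 1))) =
      ∫ x in (0:ℝ)..c * (A ^ p - 1), g x := by
  have hpos : ∀ θ ∈ Ioo (min 1 A) (max 1 A), 0 < θ := fun θ hθ =>
    (lt_min one_pos hA).trans hθ.1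
  have key := intervalIntegral.integral_comp_mul_deriv_of_deriv_nonneg (g := g)
    (f := fun θ => c * (θ ^ p - 1)) (f' := fun θ => c * (p * θ ^ (p - 1)))
    (((continuous_rpow_const hp).sub continuous_const).const_mul c).continuousOn
    (fun θ hθ => ((hasDerivAt_rpow_const (Or.inl (hpos θ hθ).ne')).sub_const 1).const_mul c)
    (fun θ hθ => by have := hpos θ hθ; positivity)
  simpa using key

theorem integral_rpow_mul_exp_neg_eq_integral_rpow_sub_one {p c A : ℝ} (hp : 0 < p) (hc : 0 < c)
    (hA : 1 ≤ A) (γ : ℝ) :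
    ∫ x in (0:ℝ)..c * (A ^ p - 1), x ^ (γ - 1) * exp (-x) =
      p * c ^ γ * exp c *
        ∫ θ in (1:ℝ)..A, θ ^ (p - 1) * (θ ^ p - 1) ^ (γ - 1) * exp (-(c * θ ^ p)) := by
  rw [← integral_comp_mul_rpow_sub_one hp.le hc.le (by linarith),
    ← intervalIntegral.integral_const_mul]
  refine intervalIntegral.integral_congr fun θ hθ => ?_
  rw [uIcc_of_le hA] at hθ
  have hθp : 1 ≤ θ ^ p := one_le_rpow hθ.1 hp.le
  have hcγ : c ^ γ = c * c ^ (γ - 1) := by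
    rw [mul_comm, ← rpow_add_one hc.ne']; ring_nf
  have hexp : exp (-(c * (θ ^ p - 1))) = exp c * exp (-(c * θ ^ p)) := by
    rw [← exp_add]; ring_nf
  rw [mul_rpow hc.le (by linarith), hexp, hcγ]
  ring

theorem gg_mul_mdens {β γ p η θ : ℝ} (hp : p ≠ 0) (hθ : 0 < θ) (u : ℝ) :
    gg (p * γ - β) p (θ ^ p) u * mdens β γ p η θ =
      p ^ 2 / (Gamma (γ - β / p) * Kstar β γ p η) * u ^ (p * γ - β - 1) *
        (θ ^ (p - 1) * (θ ^ p - 1) ^ (γ - 1) * exp (-(u ^ p * θ ^ p))) := by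
  have hpow : (θ ^ p) ^ ((p * γ - β) / p) * θ ^ (p + β - p * γ - 1) = θ ^ (p - 1) := by
    rw [← rpow_mul hθ.le, ← rpow_add hθ]; congr 1; field_simp; ring
  simp only [gg, mdens]
  rw [show (p * γ - β) / p = γ - β / p by field_simp] at hpow ⊢
  rw [← hpow]
  ring

theorem iga_is_ggsm_general (γ p η β : ℝ) (hγ : 0 < γ) (hp : 0 < p) (hη : 1 < η) :
    ∀ u, 0 < u →
      figa β γ p η u =
        ∫ θ in (1:ℝ)..(η ^ (1/p)), gg (p * γ - β) p (θ ^ p) u * mdens β γ p η θ := by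
  intro u hu
  have hA : 1 ≤ η ^ (1 / p) := one_le_rpow hη.le (by positivity)
  have hAp : (η ^ (1 / p)) ^ p = η := by rw [one_div, rpow_inv_rpow (by linarith) hp.ne']
  have hsubst := integral_rpow_mul_exp_neg_eq_integral_rpow_sub_one hp (rpow_pos_of_pos hu p) hA γ
  rw [hAp] at hsubst
  rw [intervalIntegral.integral_congr fun θ hθ => gg_mul_mdens hp.ne'
    (one_pos.trans_le (uIcc_of_le hA ▸ hθ).1) u, intervalIntegral.integral_const_mul]
  simp only [figa, Kc, Gl, hsubst]
  have hΓ : Gamma γ ≠ 0 := (Gamma_pos_of_pos hγ).ne'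
  have hu_pow : u ^ (p * γ - β - 1) = u ^ (-1 - β) * (u ^ p) ^ γ := by
    rw [← rpow_mul hu.le, ← rpow_add hu]; ring_nf
  rw [hu_pow, exp_neg]
  field_simp

theorem iga_is_ggsm (γ p η β : ℝ) (hγ : 0 < γ) (hp : 0 < p) (hη : 1 < η)
    (hβ : β < p * γ) :
    ∀ u, 0 < u →
      figa β γ p η u =
        ∫ θ in (1:ℝ)..(η ^ (1/p)), gg (p * γ - β) p (θ ^ p) u * mdens β γ p η θ :=
  iga_is_ggsm_general γ p η β hγ hp hη
end

section
/- Let γ > 1 and β ∈ ℝ with β ≠ γ - 1, and let V₁* = V₁*(η) = (1/K*_{β,γ,1,η}) (η-1)^{γ-1} (η^{β-γ+1} - 1)/(β - γ + 1). Then lim_{η → 1^+} 1/V₁*(η) = 1/γ; equivalently, lim_{η → 1^+} K*_{β,γ,1,η} (β-γ+1) / ((η-1)^{γ-1}(η^{β-γ+1}-1)) = 1/γ. -/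
open MeasureTheory Set Filter

lemma K_bounds (β γ η : ℝ) (hγ : 1 < γ) (hη : 1 < η) :
    min 1 ((1/η) ^ (-β - 1)) * ((1 - 1/η) ^ γ / γ) ≤ Kstar β γ 1 η ∧
      Kstar β γ 1 η ≤ max 1 ((1/η) ^ (-β - 1)) * ((1 - 1/η) ^ γ / γ) := by
  have hη0 : (0:ℝ) < 1/η := by positivity
  have hle : (1:ℝ)/η ≤ 1 := by
    rw [div_le_one (by linarith)]; linarith
  have hIcc : Set.uIcc (1/η) (1:ℝ) = Icc (1/η) 1 := uIcc_of_le hle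
  have hint : ∫ x in (1/η)..(1:ℝ), (1 - x) ^ (γ - 1) = (1 - 1/η) ^ γ / γ := by
    have h := intervalIntegral.integral_comp_sub_left (a := 1/η) (b := (1:ℝ))
      (fun x => x ^ (γ - 1)) 1
    simp only [sub_self] at h
    rw [h, integral_rpow (Or.inl (by linarith))]
    rw [Real.zero_rpow (by linarith : γ - 1 + 1 ≠ 0)]
    rw [show γ - 1 + 1 = γ by ring]
    ring
  have hKdef : Kstar β γ 1 η = ∫ x in (1/η)..(1:ℝ), (1 - x) ^ (γ - 1) * x ^ (-β - 1) := by
    unfold Kstar; norm_num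
  have hpt : ∀ x ∈ Icc (1/η) (1:ℝ),
      min 1 ((1/η) ^ (-β - 1)) ≤ x ^ (-β - 1) ∧
        x ^ (-β - 1) ≤ max 1 ((1/η) ^ (-β - 1)) := by
    intro x ⟨hx1, hx2⟩
    have hx0 : 0 < x := lt_of_lt_of_le hη0 hx1
    rcases le_or_gt 0 (-β - 1) with ht | ht
    · constructor
      · exact le_trans (min_le_right _ _) (Real.rpow_le_rpow hη0.le hx1 ht)
      · exact le_trans (Real.rpow_le_one hx0.le hx2 ht) (le_max_left _ _)
    · constructor
      · exact le_trans (min_le_left _ _)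
          (Real.one_le_rpow_of_pos_of_le_one_of_nonpos hx0 hx2 ht.le)
      · exact le_trans (Real.rpow_le_rpow_of_nonpos hη0 hx1 ht.le) (le_max_right _ _)
  have hcont : ContinuousOn (fun x : ℝ => (1 - x) ^ (γ - 1) * x ^ (-β - 1)) (Icc (1/η) 1) := by
    apply ContinuousOn.mul
    · exact ((continuous_const.sub continuous_id).rpow_const
        (fun x => Or.inr (by linarith))).continuousOn
    · intro x hx
      exact (Real.continuousAt_rpow_const x _
        (Or.inl (ne_of_gt (lt_of_lt_of_le hη0 hx.1)))).continuousWithinAt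
  have hintg : IntervalIntegrable (fun x : ℝ => (1 - x) ^ (γ - 1) * x ^ (-β - 1))
      volume (1/η) 1 := (hcont.mono (by rw [hIcc])).intervalIntegrable
  have hcont2 : ∀ c : ℝ, IntervalIntegrable (fun x : ℝ => c * (1 - x) ^ (γ - 1))
      volume (1/η) 1 := fun c =>
    (continuous_const.mul ((continuous_const.sub continuous_id).rpow_const
      (fun x => Or.inr (by linarith)))).intervalIntegrable _ _
  have hnn : ∀ x ∈ Icc (1/η) (1:ℝ), 0 ≤ (1 - x) ^ (γ - 1) := fun x hx =>
    Real.rpow_nonneg (by linarith [hx.2]) _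
  constructor
  · have := intervalIntegral.integral_mono_on hle (hcont2 _) hintg (fun x hx => by
      rw [mul_comm]
      exact mul_le_mul_of_nonneg_left (hpt x hx).1 (hnn x hx))
    rwa [intervalIntegral.integral_const_mul, hint, ← hKdef] at this
  · have := intervalIntegral.integral_mono_on hle hintg (hcont2 _) (fun x hx => by
      rw [mul_comm (max _ _)]
      exact mul_le_mul_of_nonneg_left (hpt x hx).2 (hnn x hx))
    rwa [intervalIntegral.integral_const_mul, hint, ← hKdef] at this

lemma A_tendsto (β γ : ℝ) (hγ : 1 < γ) :
    Tendsto (fun η : ℝ => Kstar β γ 1 η / (1 - 1/η) ^ γ)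
      (nhdsWithin 1 (Ioi 1)) (nhds (1/γ)) := by
  have hγ0 : (0:ℝ) < γ := by linarith
  have hc : Tendsto (fun η : ℝ => (1/η) ^ (-β - 1)) (nhdsWithin 1 (Ioi 1)) (nhds 1) := by
    have hca : ContinuousAt (fun η : ℝ => (1/η) ^ (-β - 1)) 1 := by
      apply ContinuousAt.rpow_const
      · exact (continuousAt_const.div continuousAt_id one_ne_zero)
      · norm_num
    have h1 : Tendsto (fun η : ℝ => (1/η) ^ (-β - 1)) (nhds 1)
        (nhds ((1/(1:ℝ)) ^ (-β - 1))) := hca.tendsto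
    have h2 := h1.mono_left (nhdsWithin_le_nhds (s := Ioi 1))
    simpa using h2
  have hmin : Tendsto (fun η : ℝ => min 1 ((1/η) ^ (-β - 1)) / γ)
      (nhdsWithin 1 (Ioi 1)) (nhds (1/γ)) := by
    have := (tendsto_const_nhds (x := (1:ℝ)).min hc).div_const γ
    simpa using this
  have hmax : Tendsto (fun η : ℝ => max 1 ((1/η) ^ (-β - 1)) / γ)
      (nhdsWithin 1 (Ioi 1)) (nhds (1/γ)) := by
    have := (tendsto_const_nhds (x := (1:ℝ)).max hc).div_const γ
    simpa using this
  apply tendsto_of_tendsto_of_tendsto_of_le_of_le' hmin hmax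
  · filter_upwards [self_mem_nhdsWithin] with η (hη : 1 < η)
    have hP : 0 < (1 - 1/η) ^ γ := by
      apply Real.rpow_pos_of_pos
      have : 1/η < 1 := by rw [div_lt_one (by linarith)]; linarith
      linarith
    rw [le_div_iff₀ hP]
    have := (K_bounds β γ η hγ hη).1
    calc min 1 ((1/η) ^ (-β-1)) / γ * (1 - 1/η) ^ γ
        = min 1 ((1/η) ^ (-β-1)) * ((1 - 1/η) ^ γ / γ) := by ring
      _ ≤ _ := this
  · filter_upwards [self_mem_nhdsWithin] with η (hη : 1 < η)
    have hP : 0 < (1 - 1/η) ^ γ := by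
      apply Real.rpow_pos_of_pos
      have : 1/η < 1 := by rw [div_lt_one (by linarith)]; linarith
      linarith
    rw [div_le_iff₀ hP]
    have := (K_bounds β γ η hγ hη).2
    calc Kstar β γ 1 η ≤ max 1 ((1/η) ^ (-β-1)) * ((1 - 1/η) ^ γ / γ) := this
      _ = max 1 ((1/η) ^ (-β-1)) / γ * (1 - 1/η) ^ γ := by ring

lemma slope_tendsto (s : ℝ) :
    Tendsto (fun η : ℝ => (η ^ s - 1) / (η - 1)) (nhdsWithin 1 (Ioi 1)) (nhds s) := by
  have h : HasDerivAt (fun x : ℝ => x ^ s) (s * (1:ℝ) ^ (s - 1)) 1 :=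
    Real.hasDerivAt_rpow_const (Or.inl one_ne_zero)
  have h2 : Tendsto (slope (fun x : ℝ => x ^ s) 1) (nhdsWithin 1 (Ioi 1))
      (nhds (s * (1:ℝ) ^ (s - 1))) :=
    (hasDerivAt_iff_tendsto_slope.mp h).mono_left
      (nhdsWithin_mono _ (fun x hx => ne_of_gt hx))
  simpa [slope_fun_def_field, Real.one_rpow] using h2

theorem V1star_limit (γ β : ℝ) (hγ : 1 < γ) (hβ : β ≠ γ - 1) :
    Tendsto
      (fun η : ℝ =>
        Kstar β γ 1 η * (β - γ + 1) / ((η - 1) ^ (γ - 1) * (η ^ (β - γ + 1) - 1)))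
      (nhdsWithin 1 (Ioi 1)) (nhds (1/γ)) := by
  set s : ℝ := β - γ + 1 with hs_def
  have hs : s ≠ 0 := fun h => hβ (by rw [hs_def] at h; linarith)
  have hA := A_tendsto β γ hγ
  have hBinv : Tendsto (fun η : ℝ => (η - 1) / (η ^ s - 1))
      (nhdsWithin 1 (Ioi 1)) (nhds s⁻¹) := by
    have := (slope_tendsto s).inv₀ hs
    refine this.congr (fun η => ?_)
    rw [inv_div]
  have hC : Tendsto (fun η : ℝ => ((η:ℝ) ^ γ)⁻¹) (nhdsWithin 1 (Ioi 1)) (nhds 1) := by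
    have h1 : ContinuousAt (fun η : ℝ => (η:ℝ) ^ γ) 1 :=
      Real.continuousAt_rpow_const 1 γ (Or.inl one_ne_zero)
    have h2 : Tendsto (fun η : ℝ => (η:ℝ) ^ γ) (nhds 1) (nhds ((1:ℝ) ^ γ)) := h1.tendsto
    have h3 := (h2.mono_left (nhdsWithin_le_nhds (s := Ioi 1))).inv₀ (by
      rw [Real.one_rpow]; exact one_ne_zero)
    simpa using h3
  have hG : Tendsto (fun η : ℝ =>
      (Kstar β γ 1 η / (1 - 1/η) ^ γ) * (((η:ℝ) ^ γ)⁻¹ * (s * ((η - 1) / (η ^ s - 1)))))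
      (nhdsWithin 1 (Ioi 1)) (nhds (1/γ * (1 * (s * s⁻¹)))) :=
    hA.mul (hC.mul (tendsto_const_nhds.mul hBinv))
  rw [mul_inv_cancel₀ hs] at hG
  simp only [mul_one, one_mul] at hG
  refine hG.congr' ?_
  filter_upwards [self_mem_nhdsWithin] with η (hη : 1 < η)
  have hη0 : (0:ℝ) < η := by linarith
  have hηm : (0:ℝ) < η - 1 := by linarith
  have h1η : 1 - 1/η = (η - 1) / η := by field_simp
  have hDne : η ^ s - 1 ≠ 0 := by
    intro h
    have hlog : Real.log (η ^ s) = 0 := by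
      rw [show η ^ s = 1 by linarith]; exact Real.log_one
    rw [Real.log_rpow hη0] at hlog
    have hlη : Real.log η ≠ 0 := ne_of_gt (Real.log_pos hη)
    exact hs (by rcases mul_eq_zero.mp hlog with h | h; exact h; exact absurd h hlη)
  have hsplit : (1 - 1/η) ^ γ = (η - 1) ^ (γ - 1) * (η - 1) / η ^ γ := by
    rw [h1η, Real.div_rpow hηm.le hη0.le]
    congr 1
    rw [show γ = (γ - 1) + 1 by ring, Real.rpow_add hηm, Real.rpow_one]
    ring_nf
  rw [hsplit]
  field_simp
end

section
/- Let γ ∈ {2, 3, …} and β ∈ ℝ with β ∉ {0, 1, …, γ-1}. Then lim_{η → 1^+} K*_{β,γ,1,η} / Σ_{k=0}^{⌊(γ-1)/2⌋} H*_{2k,β,γ,η} = 0; i.e., the acceptance probability 1/V₂* of the rejection algorithm based on the positive binomial terms tends to 0 as η ↓ 1. -/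
open MeasureTheory Set Filter

/-- `H*_{k,β,γ,η} = binom(γ-1, k) (η^(β-k) - 1)/(β - k)`. -/
noncomputable def Hstar (k : ℕ) (β : ℝ) (γ : ℕ) (η : ℝ) : ℝ :=
  ((γ - 1).choose k : ℝ) * (η ^ (β - k) - 1) / (β - k)

/-!
On `[1/η, 1]` the factor `(1 - x)^(γ-1)` is at most `(1 - 1/η)^(γ-1)`, and what remains,
`∫_{1/η}^1 x^(-β-1) dx`, is exactly the term `H*_{0,β,γ,η}` of the denominator. All terms of the
denominator are positive, so the ratio lies in `[0, (1 - 1/η)^(γ-1)]`, which shrinks to `0`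
as `η ↓ 1` because `γ - 1 > 0`.
-/

lemma rpow_sub_one_div_pos {η c : ℝ} (hη : 1 < η) (hc : c ≠ 0) : 0 < (η ^ c - 1) / c := by
  rcases hc.lt_or_gt with hc | hc
  · exact div_pos_of_neg_of_neg (by linarith [Real.rpow_lt_one_of_one_lt_of_neg hη hc]) hc
  · exact div_pos (by linarith [Real.one_lt_rpow hη hc]) hc

lemma Hstar_pos {k γ : ℕ} {β η : ℝ} (hη : 1 < η) (hk : k ≤ γ - 1) (hβ : β ≠ k) :
    0 < Hstar k β γ η := by
  rw [Hstar, mul_div_assoc]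
  exact mul_pos (by exact_mod_cast Nat.choose_pos hk) (rpow_sub_one_div_pos hη (sub_ne_zero.2 hβ))

lemma integral_rpow_neg_sub_one {β η : ℝ} (hη : 0 < η) (hβ : β ≠ 0) :
    ∫ x in (1/η)..(1:ℝ), x ^ (-β - 1) = (η ^ β - 1) / β := by
  have hinv : (0:ℝ) < 1 / η := by positivity
  rw [integral_rpow (Or.inr ⟨by contrapose! hβ; linarith,
    notMem_uIcc_of_lt hinv zero_lt_one⟩)]
  rw [show -β - 1 + 1 = -β by ring, Real.one_rpow, one_div, Real.inv_rpow hη.le,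
    Real.rpow_neg hη.le, inv_inv, div_neg, ← neg_div, neg_sub]

section Kstar

variable {β γ p η : ℝ}

lemma Kstar_nonneg (hη : 1 ≤ η) : 0 ≤ Kstar β γ p η := by
  have hinv : (0:ℝ) < 1 / η := by positivity
  refine intervalIntegral.integral_nonneg ((div_le_one (by linarith)).2 hη) fun x hx => ?_
  exact mul_nonneg (Real.rpow_nonneg (by linarith [hx.2]) _)
    (Real.rpow_nonneg (hinv.trans_le hx.1).le _)

lemma Kstar_le (hη : 1 < η) (hγ : 1 ≤ γ) (hβ : β / p ≠ 0) :
    Kstar β γ p η ≤ (1 - 1/η) ^ (γ - 1) * ((η ^ (β / p) - 1) / (β / p)) := by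
  have hη0 : (0:ℝ) < η := by linarith
  have hinv : (0:ℝ) < 1 / η := by positivity
  have hinv1 : 1 / η ≤ 1 := (div_le_one hη0).2 hη.le
  have hpow : ContinuousOn (fun x : ℝ => x ^ (-β / p - 1)) (uIcc (1/η) 1) := by
    rw [uIcc_of_le hinv1]
    exact continuousOn_id.rpow_const fun x hx => Or.inl (hinv.trans_le hx.1).ne'
  rw [← integral_rpow_neg_sub_one hη0 hβ, ← intervalIntegral.integral_const_mul, Kstar]
  refine intervalIntegral.integral_mono_on hinv1 ?_ ?_ fun x hx => ?_
  · refine ContinuousOn.intervalIntegrable (ContinuousOn.mul ?_ hpow)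
    exact (continuousOn_const.sub continuousOn_id).rpow_const fun _ _ => Or.inr (by linarith)
  · exact (continuousOn_const.mul (by simpa [neg_div] using hpow)).intervalIntegrable
  · rw [neg_div]
    exact mul_le_mul_of_nonneg_right
      (Real.rpow_le_rpow (by linarith [hx.2]) (by linarith [hx.1]) (by linarith))
      (Real.rpow_nonneg (hinv.trans_le hx.1).le _)

end Kstar

lemma Kstar_div_sum_Hstar_even_mem_Icc {γ : ℕ} {β η : ℝ} (hγ : 1 ≤ γ)
    (hβ : ∀ k : ℕ, k < γ → β ≠ k) (hη : 1 < η) :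
    Kstar β γ 1 η / ∑ k ∈ Finset.range ((γ - 1) / 2 + 1), Hstar (2 * k) β γ η
      ∈ Icc 0 ((1 - 1/η) ^ ((γ : ℝ) - 1)) := by
  have hβ0 : β ≠ 0 := by simpa using hβ 0 (by omega)
  have hterm : ∀ k ∈ Finset.range ((γ - 1) / 2 + 1), 0 < Hstar (2 * k) β γ η := by
    intro k hk
    have h2k : 2 * k ≤ γ - 1 := by rw [Finset.mem_range] at hk; omega
    exact Hstar_pos hη h2k (hβ _ (by omega))
  have h0 : 0 ∈ Finset.range ((γ - 1) / 2 + 1) := Finset.mem_range.2 (Nat.succ_pos _)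
  have hH0 : Hstar (2 * 0) β γ η = (η ^ β - 1) / β := by simp [Hstar]
  have hH0_le := Finset.single_le_sum (fun k hk => (hterm k hk).le) h0
  have hS := Finset.sum_pos hterm ⟨0, h0⟩
  have hK := Kstar_le (γ := γ) (p := 1) hη (by exact_mod_cast hγ) (by simpa using hβ0)
  rw [div_one] at hK
  have hinv1 : 1 / η ≤ 1 := (div_le_one (by linarith)).2 hη.le
  refine ⟨div_nonneg (Kstar_nonneg hη.le) hS.le, (div_le_iff₀ hS).2 ?_⟩
  calc Kstar β γ 1 η ≤ (1 - 1/η) ^ ((γ : ℝ) - 1) * ((η ^ β - 1) / β) := hK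
    _ ≤ _ := mul_le_mul_of_nonneg_left (hH0 ▸ hH0_le) (Real.rpow_nonneg (by linarith) _)

lemma tendsto_one_sub_inv_rpow_nhdsGT_one {c : ℝ} (hc : 0 < c) :
    Tendsto (fun η : ℝ => (1 - 1/η) ^ c) (nhdsWithin 1 (Ioi 1)) (nhds 0) := by
  have hlim : Tendsto (fun η : ℝ => 1 - 1/η) (nhdsWithin 1 (Ioi 1)) (nhds 0) := by
    have : ContinuousAt (fun η : ℝ => 1 - 1/η) 1 := by fun_prop (disch := norm_num)
    simpa using this.tendsto.mono_left nhdsWithin_le_nhds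
  have := (Real.continuousAt_rpow_const 0 c (Or.inr hc.le)).tendsto.comp hlim
  rwa [Real.zero_rpow hc.ne'] at this

theorem acceptance_prob_limit_BD (γ : ℕ) (hγ : 2 ≤ γ) (β : ℝ)
    (hβ : ∀ k : ℕ, k < γ → β ≠ k) :
    Tendsto
      (fun η : ℝ =>
        Kstar β γ 1 η / ∑ k ∈ Finset.range ((γ - 1) / 2 + 1), Hstar (2 * k) β γ η)
      (nhdsWithin 1 (Ioi 1)) (nhds 0) := by
  have hc : (0:ℝ) < (γ : ℝ) - 1 := by
    have : (2:ℝ) ≤ γ := by exact_mod_cast hγ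
    linarith
  have hbound := fun η (hη : η ∈ Ioi (1:ℝ)) =>
    Kstar_div_sum_Hstar_even_mem_Icc (by omega) hβ hη
  refine tendsto_of_tendsto_of_tendsto_of_le_of_le' tendsto_const_nhds
    (tendsto_one_sub_inv_rpow_nhdsGT_one hc) ?_ ?_
  · filter_upwards [self_mem_nhdsWithin] with η hη using (hbound η hη).1
  · filter_upwards [self_mem_nhdsWithin] with η hη using (hbound η hη).2
end

section
/- Let p, γ > 0, η > 1 and β < pγ. Then ∫_0^∞ v^{pγ-β-1} ∫_1^η θ^{pγ-β-1} e^{-v^p θ^p} ∫_{1/θ}^1 (1-u^p)^{γ-1} u^{-1-β} du dθ dv = p^{-1} Γ(γ - β/p) C*_{β,γ,p,η}. Consequently, the incomplete beta gamma mixture density f♯_{β,γ,p,η} integrates to 1 over (0, ∞), and f♯_{β,γ,p,η}(v) = ∫_1^η g_{pγ-β,p,θ^p}(v) m♯_{β,γ,p,η}(θ) dθ for all v > 0. -/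
open MeasureTheory Set

/-- `C*_{β,γ,p,η} = ∫_1^η θ⁻¹ ∫_{1/θ}^1 (1-u^p)^(γ-1) u^(-1-β) du dθ`. -/
noncomputable def Cstar (β γ p η : ℝ) : ℝ :=
  ∫ θ in (1:ℝ)..η, θ⁻¹ * ∫ u in (1/θ)..(1:ℝ), (1 - u ^ p) ^ (γ - 1) * u ^ (-1 - β)

/-- `C_{β,γ,p,η} = p⁻¹ Γ(γ-β/p) C*_{β,γ,p,η}`. -/
noncomputable def Cc (β γ p η : ℝ) : ℝ :=
  p⁻¹ * Real.Gamma (γ - β/p) * Cstar β γ p η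

/-- The incomplete beta gamma mixture (IBGM) density `f♯_{β,γ,p,η}(v)` for `v > 0`. -/
noncomputable def fibgm (β γ p η v : ℝ) : ℝ :=
  (Cc β γ p η)⁻¹ * v ^ (p * γ - β - 1) *
    ∫ θ in (1:ℝ)..η, θ ^ (p * γ - β - 1) * Real.exp (-(v ^ p * θ ^ p)) *
      ∫ u in (1/θ)..(1:ℝ), (1 - u ^ p) ^ (γ - 1) * u ^ (-1 - β)

/-- The mixing density `m♯_{β,γ,p,η}(θ)` for `1 < θ < η`. -/
noncomputable def msharp (β γ p η θ : ℝ) : ℝ :=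
  (Cstar β γ p η)⁻¹ * θ⁻¹ * ∫ u in (1/θ)..(1:ℝ), (1 - u ^ p) ^ (γ - 1) * u ^ (-1 - β)

/-!
Writing `I(θ) = ∫_{1/θ}^1 (1-u^p)^(γ-1) u^(-1-β) du` and `a = pγ - β`, Fubini turns the double
integral into `∫_1^η I(θ) θ^(a-1) ∫_0^∞ v^(a-1) e^(-(vθ)^p) dv dθ`, and the inner integral is the
generalized gamma integral `p⁻¹ Γ(a/p) θ^(-a)`; this leaves `p⁻¹ Γ(a/p) C*`. For the density to
integrate to `1` one needs `C* > 0`, i.e. that `I(θ)` is a genuine (integrable) positive integral: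
near `u = 1` this follows from `1 - u^p ≥ min 1 p · (1 - u)`. The mixture representation is a
pointwise identity of integrands, since `(θ^p)^(a/p) = θ^a`.
-/

section

open Real

/-- The incomplete beta integral `I(θ)` occurring in `Cstar`, `fibgm` and `msharp`. -/
noncomputable def incBetaInt (p γ β θ : ℝ) : ℝ :=
  ∫ u in (1/θ)..(1:ℝ), (1 - u ^ p) ^ (γ - 1) * u ^ (-1 - β)

theorem min_one_mul_one_sub_le_one_sub_rpow {p u : ℝ} (hp : 0 < p) (hu₀ : 0 ≤ u) (hu₁ : u ≤ 1) :
    min 1 p * (1 - u) ≤ 1 - u ^ p := by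
  rcases le_total p 1 with hp1 | hp1
  · have bernoulli := rpow_one_add_le_one_add_mul_self (s := u - 1) (by linarith) hp.le hp1
    rw [add_sub_cancel] at bernoulli
    nlinarith [min_le_right 1 p]
  · have : u ^ p ≤ u ^ (1 : ℝ) := rpow_le_rpow_of_exponent_ge' hu₀ hu₁ zero_le_one hp1
    rw [rpow_one] at this
    nlinarith [min_le_left 1 p]

theorem intervalIntegrable_one_sub_rpow_rpow {p γ : ℝ} (hp : 0 < p) (hγ : 0 < γ) :
    IntervalIntegrable (fun u : ℝ => (1 - u ^ p) ^ (γ - 1)) volume 0 1 := by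
  have hcont : ContinuousOn (fun u : ℝ => 1 - u ^ p) (uIcc 0 1) :=
    continuousOn_const.sub (continuousOn_id.rpow_const fun _ _ => Or.inr hp.le)
  rcases le_or_gt 1 γ with hγ1 | hγ1
  · exact (hcont.rpow_const fun _ _ => Or.inr (by linarith)).intervalIntegrable
  set m := min 1 p
  have hm : 0 < m := lt_min one_pos hp
  have hdom : IntervalIntegrable (fun u : ℝ => m ^ (γ - 1) * (1 - u) ^ (γ - 1)) volume 0 1 := by
    have h := (intervalIntegral.intervalIntegrable_rpow' (r := γ - 1) (a := 0) (b := 1)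
      (by linarith)).comp_sub_left 1
    simp only [sub_zero, sub_self] at h
    exact h.symm.const_mul _
  refine hdom.mono_fun' (by fun_prop : Measurable _).aestronglyMeasurable ?_
  rw [uIoc_of_le zero_le_one]
  refine ae_restrict_of_forall_mem measurableSet_Ioc fun u hu => ?_
  have hup : u ^ p ≤ 1 := rpow_le_one hu.1.le hu.2 hp.le
  dsimp only
  rw [norm_of_nonneg (rpow_nonneg (by linarith) _), ← mul_rpow hm.le (by linarith [hu.2])]
  rcases hu.2.lt_or_eq with hu1 | rfl
  · exact rpow_le_rpow_of_nonpos (by nlinarith)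
      (min_one_mul_one_sub_le_one_sub_rpow hp hu.1.le hu.2) (by linarith)
  · simp [zero_rpow (by linarith : γ - 1 ≠ 0)]

theorem intervalIntegrable_incBetaInt_integrand {p γ β c : ℝ} (hp : 0 < p) (hγ : 0 < γ) (hc : 0 < c)
    (hc1 : c ≤ 1) :
    IntervalIntegrable (fun u : ℝ => (1 - u ^ p) ^ (γ - 1) * u ^ (-1 - β)) volume c 1 := by
  refine ((intervalIntegrable_one_sub_rpow_rpow hp hγ).mono_set ?_).mul_continuousOn
    (continuousOn_id.rpow_const fun u hu => Or.inl ?_)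
  · rw [uIcc_of_le hc1, uIcc_of_le zero_le_one]
    exact Icc_subset_Icc_left hc.le
  · rw [uIcc_of_le hc1] at hu
    exact (hc.trans_le hu.1).ne'

theorem continuousOn_incBetaInt {p γ β η : ℝ} (hp : 0 < p) (hγ : 0 < γ) (hη : 1 ≤ η) :
    ContinuousOn (incBetaInt p γ β) (Icc 1 η) := by
  have hη₀ : 0 < η := one_pos.trans_le hη
  have hprim := intervalIntegral.continuousOn_primitive_interval_left
    ((intervalIntegrable_iff' (h := enorm_ne_top)).mp
      (intervalIntegrable_incBetaInt_integrand (β := β) hp hγ (one_div_pos.mpr hη₀)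
        ((div_le_one hη₀).mpr hη)))
  refine hprim.comp (continuousOn_const.div continuousOn_id fun θ hθ => ?_) fun θ hθ => ?_
  · exact (one_pos.trans_le hθ.1).ne'
  · have hθ₀ : 0 < θ := one_pos.trans_le hθ.1
    rw [uIcc_of_le ((div_le_one hη₀).mpr hη)]
    exact ⟨one_div_le_one_div_of_le hθ₀ hθ.2, (div_le_one hθ₀).mpr hθ.1⟩

theorem incBetaInt_pos {p γ β θ : ℝ} (hp : 0 < p) (hγ : 0 < γ) (hθ : 1 < θ) :
    0 < incBetaInt p γ β θ := by
  have hθ₀ : 0 < θ := one_pos.trans hθ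
  have hc : 0 < 1 / θ := one_div_pos.mpr hθ₀
  have hc1 : 1 / θ < 1 := (div_lt_one hθ₀).mpr hθ
  refine intervalIntegral.intervalIntegral_pos_of_pos_on
    (intervalIntegrable_incBetaInt_integrand hp hγ hc hc1.le) (fun u hu => ?_) hc1
  have hu₀ : 0 < u := hc.trans hu.1
  have hup : u ^ p < 1 := rpow_lt_one hu₀.le hu.2 hp
  exact mul_pos (rpow_pos_of_pos (by linarith) _) (rpow_pos_of_pos hu₀ _)

theorem Cstar_pos {β γ p η : ℝ} (hp : 0 < p) (hγ : 0 < γ) (hη : 1 < η) : 0 < Cstar β γ p η := by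
  refine intervalIntegral.intervalIntegral_pos_of_pos_on ?_
    (fun θ hθ => mul_pos (inv_pos.mpr (one_pos.trans hθ.1)) (incBetaInt_pos hp hγ hθ.1)) hη
  refine ContinuousOn.intervalIntegrable ?_
  rw [uIcc_of_le hη.le]
  exact (continuousOn_id.inv₀ fun θ hθ => (one_pos.trans_le hθ.1).ne').mul
    (continuousOn_incBetaInt hp hγ hη.le)

theorem integrableOn_rpow_mul_exp_neg_rpow_mul_rpow {p a θ : ℝ} (hp : 0 < p) (ha : 0 < a)
    (hθ : 0 < θ) :
    IntegrableOn (fun v : ℝ => v ^ (a - 1) * exp (-(v ^ p * θ ^ p))) (Ioi 0) := by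
  simpa only [neg_mul, mul_comm (θ ^ p)] using
    integrableOn_rpow_mul_exp_neg_mul_rpow (by linarith) hp (rpow_pos_of_pos hθ p)

theorem integral_rpow_mul_exp_neg_rpow_mul_rpow {p a θ : ℝ} (hp : 0 < p) (ha : 0 < a)
    (hθ : 0 < θ) :
    ∫ v in Ioi (0:ℝ), v ^ (a - 1) * exp (-(v ^ p * θ ^ p)) = p⁻¹ * Gamma (a / p) * θ ^ (-a) := by
  have h := integral_rpow_mul_exp_neg_mul_rpow hp (show -1 < a - 1 by linarith)
    (rpow_pos_of_pos hθ p)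
  simp only [neg_mul, mul_comm (θ ^ p)] at h
  rw [h, sub_add_cancel, ← rpow_mul hθ.le, mul_div_cancel₀ _ hp.ne', one_div]
  ring

theorem integral_rpow_mul_rpow_mul_exp_neg_rpow_mul {p a θ : ℝ} (hp : 0 < p) (ha : 0 < a)
    (hθ : 0 < θ) (y : ℝ) :
    ∫ v in Ioi (0:ℝ), v ^ (a - 1) * (θ ^ (a - 1) * exp (-(v ^ p * θ ^ p)) * y) =
      p⁻¹ * Gamma (a / p) * (θ⁻¹ * y) := by
  have hθa : θ ^ (a - 1) * θ ^ (-a) = θ⁻¹ := by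
    rw [← rpow_add hθ, show a - 1 + -a = -1 by ring, rpow_neg_one]
  calc ∫ v in Ioi (0:ℝ), v ^ (a - 1) * (θ ^ (a - 1) * exp (-(v ^ p * θ ^ p)) * y)
      = θ ^ (a - 1) * y * ∫ v in Ioi (0:ℝ), v ^ (a - 1) * exp (-(v ^ p * θ ^ p)) := by
        rw [← integral_const_mul]
        congr 1 with v
        ring
    _ = p⁻¹ * Gamma (a / p) * (θ⁻¹ * y) := by
        rw [integral_rpow_mul_exp_neg_rpow_mul_rpow hp ha hθ, ← hθa]
        ring

theorem integral_rpow_mul_intervalIntegral_exp_neg_rpow {p a s t : ℝ} {h : ℝ → ℝ}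
    (hp : 0 < p) (ha : 0 < a) (hs : 0 < s) (hst : s ≤ t) (hh : IntervalIntegrable h volume s t) :
    ∫ v in Ioi (0:ℝ), v ^ (a - 1) * ∫ θ in s..t, θ ^ (a - 1) * exp (-(v ^ p * θ ^ p)) * h θ =
      p⁻¹ * Gamma (a / p) * ∫ θ in s..t, θ⁻¹ * h θ := by
  set F : ℝ → ℝ → ℝ := fun v θ => v ^ (a - 1) * (θ ^ (a - 1) * exp (-(v ^ p * θ ^ p)) * h θ)
  have hθ₀ : ∀ θ ∈ Ioc s t, 0 < θ := fun θ hθ => hs.trans hθ.1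
  have hh' : IntegrableOn h (Ioc s t) := (intervalIntegrable_iff_integrableOn_Ioc_of_le hst).mp hh
  have hweight : IntegrableOn (fun θ => p⁻¹ * Gamma (a / p) * (θ⁻¹ * ‖h θ‖)) (Ioc s t) := by
    have hinv : ContinuousOn (fun θ : ℝ => θ⁻¹) (uIcc s t) := by
      refine continuousOn_id.inv₀ fun θ hθ => ?_
      rw [uIcc_of_le hst] at hθ
      exact (hs.trans_le hθ.1).ne'
    exact ((hh.norm.continuousOn_mul hinv).const_mul _).1
  have hF : Integrable (Function.uncurry F)
      ((volume.restrict (Ioi 0)).prod (volume.restrict (Ioc s t))) := by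
    have hmeas : AEStronglyMeasurable (Function.uncurry F)
        ((volume.restrict (Ioi 0)).prod (volume.restrict (Ioc s t))) := by
      have hk : Measurable fun z : ℝ × ℝ =>
          z.1 ^ (a - 1) * (z.2 ^ (a - 1) * exp (-(z.1 ^ p * z.2 ^ p))) := by
        fun_prop
      refine (hk.aestronglyMeasurable.mul hh'.aestronglyMeasurable.comp_snd).congr
        (.of_forall fun z => ?_)
      simp only [F, Function.uncurry, Pi.mul_apply]
      ring
    refine (integrable_prod_iff' hmeas).mpr ⟨?_, hweight.congr ?_⟩
    · filter_upwards [ae_restrict_mem measurableSet_Ioc] with θ hθ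
      refine ((integrableOn_rpow_mul_exp_neg_rpow_mul_rpow hp ha (hθ₀ θ hθ)).const_mul
        (θ ^ (a - 1) * h θ)).congr (.of_forall fun v => ?_)
      simp only [F, Function.uncurry_apply_pair]
      ring
    · filter_upwards [ae_restrict_mem measurableSet_Ioc] with θ hθ
      rw [← integral_rpow_mul_rpow_mul_exp_neg_rpow_mul hp ha (hθ₀ θ hθ)]
      refine setIntegral_congr_fun measurableSet_Ioi fun v hv => ?_
      simp only [F, Function.uncurry_apply_pair, norm_mul,
        norm_of_nonneg (rpow_nonneg (le_of_lt hv) _), norm_of_nonneg (rpow_nonneg (hθ₀ θ hθ).le _), norm_of_nonneg (exp_pos _).le]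
  calc ∫ v in Ioi (0:ℝ), v ^ (a - 1) * ∫ θ in s..t, θ ^ (a - 1) * exp (-(v ^ p * θ ^ p)) * h θ
      = ∫ v in Ioi (0:ℝ), ∫ θ in Ioc s t, F v θ := by
        congr 1 with v
        rw [intervalIntegral.integral_of_le hst, ← integral_const_mul]
    _ = ∫ θ in Ioc s t, ∫ v in Ioi (0:ℝ), F v θ := integral_integral_swap hF
    _ = ∫ θ in Ioc s t, p⁻¹ * Gamma (a / p) * (θ⁻¹ * h θ) :=
        setIntegral_congr_fun measurableSet_Ioc fun θ hθ =>
          integral_rpow_mul_rpow_mul_exp_neg_rpow_mul hp ha (hθ₀ θ hθ) (h θ)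
    _ = p⁻¹ * Gamma (a / p) * ∫ θ in s..t, θ⁻¹ * h θ := by
        rw [integral_const_mul, intervalIntegral.integral_of_le hst]

theorem gg_mul_msharp {β γ p η θ : ℝ} (hp : 0 < p) (hθ : 0 < θ) (v : ℝ) :
    gg (p * γ - β) p (θ ^ p) v * msharp β γ p η θ =
      (Cc β γ p η)⁻¹ * v ^ (p * γ - β - 1) *
        (θ ^ (p * γ - β - 1) * exp (-(v ^ p * θ ^ p)) * incBetaInt p γ β θ) := by
  have hexp : (p * γ - β) / p = γ - β / p := by field_simp
  have hpow : (θ ^ p) ^ (γ - β / p) = θ ^ (p * γ - β - 1) * θ := by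
    rw [← rpow_mul hθ.le, ← hexp, mul_div_cancel₀ _ hp.ne', ← rpow_add_one hθ.ne', sub_add_cancel]
  simp only [gg, msharp, Cc, incBetaInt, hexp, hpow, mul_inv, inv_inv]
  field_simp

end

theorem ibgm_normalization (p γ η β : ℝ) (hp : 0 < p) (hγ : 0 < γ) (hη : 1 < η)
    (hβ : β < p * γ) :
    (∫ v in Ioi (0:ℝ), v ^ (p * γ - β - 1) *
        ∫ θ in (1:ℝ)..η, θ ^ (p * γ - β - 1) * Real.exp (-(v ^ p * θ ^ p)) *
          ∫ u in (1/θ)..(1:ℝ), (1 - u ^ p) ^ (γ - 1) * u ^ (-1 - β)) =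
      p⁻¹ * Real.Gamma (γ - β / p) * Cstar β γ p η ∧
    (∫ v in Ioi (0:ℝ), fibgm β γ p η v) = 1 ∧
    ∀ v, 0 < v →
      fibgm β γ p η v = ∫ θ in (1:ℝ)..η, gg (p * γ - β) p (θ ^ p) v * msharp β γ p η θ := by
  have ha : 0 < p * γ - β := by linarith
  have hexp : (p * γ - β) / p = γ - β / p := by field_simp
  have hCc : 0 < Cc β γ p η :=
    mul_pos (mul_pos (inv_pos.mpr hp) (Real.Gamma_pos_of_pos (hexp ▸ div_pos ha hp)))
      (Cstar_pos hp hγ hη)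
  have hmass := integral_rpow_mul_intervalIntegral_exp_neg_rpow (h := incBetaInt p γ β) hp ha
    one_pos hη.le ((continuousOn_incBetaInt hp hγ hη.le).intervalIntegrable_of_Icc hη.le)
  rw [hexp] at hmass
  refine ⟨hmass, ?_, fun v _ => ?_⟩
  · calc (∫ v in Ioi (0:ℝ), fibgm β γ p η v)
        = (Cc β γ p η)⁻¹ * Cc β γ p η := by
          simp only [fibgm, mul_assoc (Cc β γ p η)⁻¹]
          rw [integral_const_mul]
          exact congrArg _ hmass
      _ = 1 := inv_mul_cancel₀ hCc.ne'
  · have hθ : ∀ θ ∈ uIcc 1 η, 0 < θ := fun θ hθ =>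
      (lt_min one_pos (one_pos.trans hη)).trans_le hθ.1
    rw [intervalIntegral.integral_congr fun θ hθ' => gg_mul_msharp hp (hθ θ hθ') v,
      intervalIntegral.integral_const_mul]
    rfl
end

section
/- Let γ ∈ {1, 2, 3, …}, p > 0, η > 1 and β < pγ with β ≠ pk for all k ∈ {0, 1, …, γ-1}. Let W be a random variable with density f♯_{β,γ,p,η}. Then for every ξ > β - γp with ξ ≠ 0 and ξ ≠ β - pk for all k ∈ {0, 1, …, γ-1}, E[W^ξ] = (Γ(γ + (ξ-β)/p) / (Γ(γ - β/p) C*_{β,γ,p,η})) · Σ_{k=0}^{γ-1} binom(γ-1, k) ((-1)^k/(pk - β)) [ (1 - η^{-ξ})/ξ + (1 - η^{β-pk-ξ})/(β - pk - ξ) ]. -/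
open MeasureTheory Set

/-!
Write `E[W^ξ] = ∫₀^∞ v^ξ f♯(v) dv` and integrate over `v` first (Fubini): for each mixing
parameter `θ` this is a generalized gamma integral,
`∫₀^∞ v^q e^{-(vθ)^p} dv = p⁻¹ Γ((q+1)/p) θ^{-(q+1)}`, which leaves
`p⁻¹ Γ(γ + (ξ-β)/p) ∫_1^η θ^{-1-ξ} ∫_{1/θ}^1 (1-u^p)^{γ-1} u^{-1-β} du dθ`.
Expanding `(1-u^p)^{γ-1}` by the binomial theorem turns both remaining integrals into integrals
of pure powers.
-/

open Real

/-- The inner integral of `Cstar` and `fibgm`, with `r = γ - 1`. -/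
noncomputable def incBetaTail (p β r θ : ℝ) : ℝ :=
  ∫ u in (1/θ)..(1:ℝ), (1 - u ^ p) ^ r * u ^ (-1 - β)

section IncBetaTail

variable {p β : ℝ}

lemma incBetaTail_nonneg (r : ℝ) (hp : 0 ≤ p) {θ : ℝ} (hθ : 1 ≤ θ) :
    0 ≤ incBetaTail p β r θ := by
  have hθ0 : 0 < θ := zero_lt_one.trans_le hθ
  refine intervalIntegral.integral_nonneg ((div_le_one hθ0).2 hθ) fun u hu => ?_
  have hu0 : 0 < u := (one_div_pos.2 hθ0).trans_le hu.1
  have hup : u ^ p ≤ 1 := rpow_le_one hu0.le hu.2 hp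
  exact mul_nonneg (rpow_nonneg (by linarith) _) (rpow_nonneg hu0.le _)

lemma continuousOn_incBetaTail_natCast (m : ℕ) {η : ℝ} (hη : 1 ≤ η) :
    ContinuousOn (incBetaTail p β m) (Icc 1 η) := by
  have hη0 : 0 < η := zero_lt_one.trans_le hη
  have hsub : uIcc (1/η) 1 ⊆ Ioi 0 := by
    rw [uIcc_of_le ((div_le_one hη0).2 hη)]
    exact fun u hu => (one_div_pos.2 hη0).trans_le hu.1
  have hg : ContinuousOn (fun u : ℝ => (1 - u ^ p) ^ (m : ℝ) * u ^ (-1 - β)) (Ioi 0) := by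
    simp only [rpow_natCast]
    have hpow (s : ℝ) : ContinuousOn (fun u : ℝ => u ^ s) (Ioi 0) :=
      continuousOn_id.rpow_const fun u hu => Or.inl (ne_of_gt hu)
    exact ((continuousOn_const.sub (hpow p)).pow m).mul (hpow _)
  have hprim := intervalIntegral.continuousOn_primitive_interval_left
    (μ := volume) ((hg.mono hsub).integrableOn_compact isCompact_uIcc)
  refine hprim.comp (continuousOn_const.div continuousOn_id fun θ hθ => ?_) fun θ hθ => ?_
  · exact (zero_lt_one.trans_le hθ.1).ne'
  · have hθ0 : 0 < θ := zero_lt_one.trans_le hθ.1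
    rw [uIcc_of_le ((div_le_one hη0).2 hη)]
    exact ⟨one_div_le_one_div_of_le hθ0 hθ.2, (div_le_one hθ0).2 hθ.1⟩

lemma incBetaTail_natCast_eq_sum (m : ℕ) (hβk : ∀ k : ℕ, k < m + 1 → β ≠ p * k) {θ : ℝ}
    (hθ : 0 < θ) :
    incBetaTail p β m θ = ∑ k ∈ Finset.range (m + 1),
      (m.choose k : ℝ) * ((-1) ^ k / (p * k - β)) * (1 - θ ^ (β - p * k)) := by
  have hpos : ∀ u ∈ uIcc (1/θ) 1, 0 < u := fun u hu =>
    (lt_min (one_div_pos.2 hθ) one_pos).trans_le hu.1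
  have h0 : (0:ℝ) ∉ uIcc (1/θ) 1 := fun h => (hpos 0 h).ne rfl
  have hexpand : EqOn (fun u : ℝ => (1 - u ^ p) ^ (m : ℝ) * u ^ (-1 - β))
      (fun u => ∑ k ∈ Finset.range (m + 1), (m.choose k : ℝ) * (-1) ^ k * u ^ (p * k - 1 - β))
      (uIcc (1/θ) 1) := by
    intro u hu
    have hu0 := hpos u hu
    simp only [rpow_natCast, sub_eq_neg_add (1 : ℝ), add_pow, Finset.sum_mul]
    refine Finset.sum_congr rfl fun k _ => ?_
    rw [one_pow, mul_one, neg_pow, ← rpow_natCast (u ^ p), ← rpow_mul hu0.le,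
      show p * k - 1 - β = p * k + (-1 - β) by ring, rpow_add hu0]
    ring
  rw [incBetaTail, intervalIntegral.integral_congr hexpand, intervalIntegral.integral_finsetSum
    fun k _ => (intervalIntegral.intervalIntegrable_rpow (Or.inr h0)).const_mul _]
  refine Finset.sum_congr rfl fun k hk => ?_
  have hne : p * k - 1 - β ≠ -1 := fun h => hβk k (Finset.mem_range.1 hk) (by linarith)
  rw [intervalIntegral.integral_const_mul, integral_rpow (Or.inr ⟨hne, h0⟩), one_rpow,
    one_div, inv_rpow hθ.le, ← rpow_neg hθ.le, show p * k - 1 - β + 1 = p * k - β by ring,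
    neg_sub]
  ring

lemma integral_rpow_mul_incBetaTail_natCast (m : ℕ) (hβk : ∀ k : ℕ, k < m + 1 → β ≠ p * k)
    {η ξ : ℝ} (hη : 0 < η) (hξ0 : ξ ≠ 0) (hξk : ∀ k : ℕ, k < m + 1 → ξ ≠ β - p * k) :
    ∫ θ in (1:ℝ)..η, θ ^ (-1 - ξ) * incBetaTail p β m θ =
      ∑ k ∈ Finset.range (m + 1), (m.choose k : ℝ) * ((-1) ^ k / (p * k - β)) *
        ((1 - η ^ (-ξ)) / ξ + (1 - η ^ (β - p * k - ξ)) / (β - p * k - ξ)) := by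
  have hpos : ∀ θ ∈ uIcc 1 η, 0 < θ := fun θ hθ => (lt_min one_pos hη).trans_le hθ.1
  have h0 : (0:ℝ) ∉ uIcc 1 η := fun h => (hpos 0 h).ne rfl
  have hrpow (s : ℝ) : IntervalIntegrable (fun θ : ℝ => θ ^ s) volume 1 η :=
    intervalIntegral.intervalIntegrable_rpow (Or.inr h0)
  have hexpand : EqOn (fun θ : ℝ => θ ^ (-1 - ξ) * incBetaTail p β m θ)
      (fun θ => ∑ k ∈ Finset.range (m + 1), (m.choose k : ℝ) * ((-1) ^ k / (p * k - β)) *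
        (θ ^ (-1 - ξ) - θ ^ (β - p * k - ξ - 1))) (uIcc 1 η) := by
    intro θ hθ
    have hθ0 := hpos θ hθ
    simp only [incBetaTail_natCast_eq_sum m hβk hθ0, Finset.mul_sum]
    refine Finset.sum_congr rfl fun k _ => ?_
    rw [show β - p * k - ξ - 1 = -1 - ξ + (β - p * k) by ring, rpow_add hθ0]
    ring
  rw [intervalIntegral.integral_congr hexpand, intervalIntegral.integral_finsetSum
    fun k _ => ((hrpow _).sub (hrpow _)).const_mul _]
  refine Finset.sum_congr rfl fun k hk => ?_
  have hne₁ : -1 - ξ ≠ -1 := fun h => hξ0 (by linarith)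
  have hne₂ : β - p * k - ξ - 1 ≠ -1 := fun h => hξk k (Finset.mem_range.1 hk) (by linarith)
  rw [intervalIntegral.integral_const_mul, intervalIntegral.integral_sub (hrpow _) (hrpow _),
    integral_rpow (Or.inr ⟨hne₁, h0⟩), integral_rpow (Or.inr ⟨hne₂, h0⟩), one_rpow, one_rpow,
    show -1 - ξ + 1 = -ξ by ring, show β - p * k - ξ - 1 + 1 = β - p * k - ξ by ring]
  ring

end IncBetaTail

section ExpMixture

variable {p η : ℝ} {w : ℝ → ℝ}

lemma aestronglyMeasurable_exp_mixture_kernel {μ ν : Measure ℝ} [SFinite ν]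
    (hw : AEStronglyMeasurable w ν) :
    AEStronglyMeasurable (fun z : ℝ × ℝ => exp (-(z.1 ^ p * z.2 ^ p)) * w z.2) (μ.prod ν) :=
  (by fun_prop : Measurable fun z : ℝ × ℝ => exp (-(z.1 ^ p * z.2 ^ p))).aestronglyMeasurable
    |>.mul (hw.comp_quasiMeasurePreserving Measure.quasiMeasurePreserving_snd)

lemma aestronglyMeasurable_intervalIntegral_exp_mixture (hη : 1 ≤ η)
    (hw : AEStronglyMeasurable w (volume.restrict (Ioc 1 η))) :
    AEStronglyMeasurable (fun v => ∫ θ in (1:ℝ)..η, exp (-(v ^ p * θ ^ p)) * w θ) volume := by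
  simp only [intervalIntegral.integral_of_le hη]
  exact (aestronglyMeasurable_exp_mixture_kernel (μ := volume) hw).integral_prod_right'

lemma integral_rpow_mul_intervalIntegral_exp_mixture {q : ℝ} (hp : 0 < p) (hq : -1 < q)
    (hη : 1 ≤ η) (hw : IntegrableOn w (Ioc 1 η)) :
    ∫ v in Ioi 0, v ^ q * ∫ θ in (1:ℝ)..η, exp (-(v ^ p * θ ^ p)) * w θ =
      p⁻¹ * Gamma ((q + 1) / p) * ∫ θ in (1:ℝ)..η, θ ^ (-(q + 1)) * w θ := by
  set K : ℝ → ℝ → ℝ := fun v θ => v ^ q * (exp (-(v ^ p * θ ^ p)) * w θ)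
  have hK_meas : AEStronglyMeasurable (Function.uncurry K)
      ((volume.restrict (Ioi 0)).prod (volume.restrict (Ioc 1 η))) :=
    ((by fun_prop : Measurable fun z : ℝ × ℝ => z.1 ^ q).aestronglyMeasurable.mul
      (aestronglyMeasurable_exp_mixture_kernel hw.aestronglyMeasurable))
  -- on `θ ≥ 1`, `|K v θ| ≤ v ^ q * exp (-v ^ p) * |w θ|`
  have hK_int : Integrable (Function.uncurry K)
      ((volume.restrict (Ioi 0)).prod (volume.restrict (Ioc 1 η))) := by
    refine ((integrableOn_rpow_mul_exp_neg_mul_rpow hq hp one_pos).mul_prod hw.norm).mono'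
      hK_meas ?_
    rw [Measure.prod_restrict]
    filter_upwards [self_mem_ae_restrict (measurableSet_Ioi.prod measurableSet_Ioc)]
      with ⟨v, θ⟩ ⟨hv, hθ⟩
    have hv0 : 0 < v := hv
    have hexp : exp (-(v ^ p * θ ^ p)) ≤ exp (-1 * v ^ p) := by
      rw [exp_le_exp, neg_one_mul, neg_le_neg_iff]
      exact le_mul_of_one_le_right (rpow_nonneg hv0.le p) (one_le_rpow hθ.1.le hp.le)
    simp only [Function.uncurry, K, norm_mul, Real.norm_of_nonneg (rpow_nonneg hv0.le q),
      Real.norm_of_nonneg (exp_nonneg _), mul_assoc]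
    gcongr
  have hinner (θ : ℝ) (hθ : θ ∈ Ioc 1 η) :
      ∫ v in Ioi 0, K v θ = p⁻¹ * Gamma ((q + 1) / p) * (θ ^ (-(q + 1)) * w θ) := by
    have hθ0 : 0 < θ := zero_lt_one.trans hθ.1
    have hpow : (θ ^ p) ^ (-(q + 1) / p) = θ ^ (-(q + 1)) := by
      rw [← rpow_mul hθ0.le, mul_div_cancel₀ _ hp.ne']
    calc ∫ v in Ioi 0, K v θ = (∫ v in Ioi 0, v ^ q * exp (-θ ^ p * v ^ p)) * w θ := by
          rw [← integral_mul_const]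
          refine setIntegral_congr_fun measurableSet_Ioi fun v _ => ?_
          simp only [K, neg_mul, mul_comm (θ ^ p), mul_assoc]
      _ = _ := by
          rw [integral_rpow_mul_exp_neg_mul_rpow hp hq (rpow_pos_of_pos hθ0 p), hpow]
          ring
  calc ∫ v in Ioi 0, v ^ q * ∫ θ in (1:ℝ)..η, exp (-(v ^ p * θ ^ p)) * w θ
      = ∫ v in Ioi 0, ∫ θ in Ioc 1 η, K v θ := by
        simp only [intervalIntegral.integral_of_le hη, K, integral_const_mul]
    _ = ∫ θ in Ioc 1 η, ∫ v in Ioi 0, K v θ := integral_integral_swap hK_int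
    _ = ∫ θ in Ioc 1 η, p⁻¹ * Gamma ((q + 1) / p) * (θ ^ (-(q + 1)) * w θ) :=
        setIntegral_congr_fun measurableSet_Ioc hinner
    _ = _ := by rw [integral_const_mul, intervalIntegral.integral_of_le hη]

end ExpMixture

section IBGM

variable {β γ p η : ℝ}

lemma Cstar_nonneg (hp : 0 ≤ p) (hη : 1 ≤ η) : 0 ≤ Cstar β γ p η :=
  intervalIntegral.integral_nonneg hη fun _ hθ =>
    mul_nonneg (inv_nonneg.2 (zero_le_one.trans hθ.1)) (incBetaTail_nonneg _ hp hθ.1)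

lemma fibgm_nonneg (hp : 0 < p) (hβ : β < p * γ) (hη : 1 ≤ η) {v : ℝ} (hv : 0 ≤ v) :
    0 ≤ fibgm β γ p η v := by
  have hΓ : 0 < Gamma (γ - β / p) :=
    Gamma_pos_of_pos (sub_pos.2 ((div_lt_iff₀ hp).2 (by linarith)))
  have hCc : 0 ≤ Cc β γ p η :=
    mul_nonneg (mul_nonneg (inv_nonneg.2 hp.le) hΓ.le) (Cstar_nonneg hp.le hη)
  refine mul_nonneg (mul_nonneg (inv_nonneg.2 hCc) (rpow_nonneg hv _))
    (intervalIntegral.integral_nonneg hη fun _ hθ => ?_)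
  exact mul_nonneg (mul_nonneg (rpow_nonneg (zero_le_one.trans hθ.1) _) (exp_nonneg _))
    (incBetaTail_nonneg _ hp.le hθ.1)

lemma fibgm_eq_mixture (v : ℝ) :
    fibgm β γ p η v = (Cc β γ p η)⁻¹ * v ^ (p * γ - β - 1) *
      ∫ θ in (1:ℝ)..η, exp (-(v ^ p * θ ^ p)) *
        (θ ^ (p * γ - β - 1) * incBetaTail p β (γ - 1) θ) := by
  rw [fibgm]
  congr 1
  exact intervalIntegral.integral_congr fun θ _ => by simp only [incBetaTail]; ring

lemma integrableOn_rpow_mul_incBetaTail (c : ℝ)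
    (hT : ContinuousOn (incBetaTail p β (γ - 1)) (Icc 1 η)) :
    IntegrableOn (fun θ => θ ^ c * incBetaTail p β (γ - 1) θ) (Ioc 1 η) :=
  (((continuousOn_id.rpow_const fun _ hθ => Or.inl (zero_lt_one.trans_le hθ.1).ne').mul
    hT).integrableOn_Icc).mono_set Ioc_subset_Icc_self

lemma aestronglyMeasurable_fibgm (hη : 1 ≤ η)
    (hT : ContinuousOn (incBetaTail p β (γ - 1)) (Icc 1 η)) :
    AEStronglyMeasurable (fibgm β γ p η) volume := by
  simp only [funext fibgm_eq_mixture]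
  have hpow : Measurable fun v : ℝ => v ^ (p * γ - β - 1) := by fun_prop
  exact (hpow.aestronglyMeasurable.const_mul _).mul
    (aestronglyMeasurable_intervalIntegral_exp_mixture hη
      (integrableOn_rpow_mul_incBetaTail _ hT).aestronglyMeasurable)

lemma setIntegral_fibgm_mul_rpow {ξ : ℝ} (hp : 0 < p) (hη : 1 ≤ η) (hξ : β - γ * p < ξ)
    (hT : ContinuousOn (incBetaTail p β (γ - 1)) (Icc 1 η)) :
    ∫ v in Ioi 0, fibgm β γ p η v * v ^ ξ = (Cc β γ p η)⁻¹ *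
      (p⁻¹ * Gamma (γ + (ξ - β) / p) *
        ∫ θ in (1:ℝ)..η, θ ^ (-1 - ξ) * incBetaTail p β (γ - 1) θ) := by
  set c := p * γ - β - 1
  have hq : -1 < c + ξ := by linarith
  calc ∫ v in Ioi 0, fibgm β γ p η v * v ^ ξ
      = ∫ v in Ioi 0, (Cc β γ p η)⁻¹ * (v ^ (c + ξ) * ∫ θ in (1:ℝ)..η,
          exp (-(v ^ p * θ ^ p)) * (θ ^ c * incBetaTail p β (γ - 1) θ)) := by
        refine setIntegral_congr_fun measurableSet_Ioi fun v hv => ?_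
        rw [fibgm_eq_mixture, rpow_add hv]
        ring
    _ = (Cc β γ p η)⁻¹ * (p⁻¹ * Gamma ((c + ξ + 1) / p) *
          ∫ θ in (1:ℝ)..η, θ ^ (-(c + ξ + 1)) * (θ ^ c * incBetaTail p β (γ - 1) θ)) := by
        rw [integral_const_mul, integral_rpow_mul_intervalIntegral_exp_mixture hp hq hη
          (integrableOn_rpow_mul_incBetaTail _ hT)]
    _ = _ := by
        have hΓ : (c + ξ + 1) / p = γ + (ξ - β) / p := by field_simp; ring
        rw [hΓ]
        congr 2
        refine intervalIntegral.integral_congr fun θ hθ => ?_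
        have hθ0 : 0 < θ := (lt_min one_pos (by linarith)).trans_le hθ.1
        rw [← mul_assoc, ← rpow_add hθ0]
        ring_nf

end IBGM

lemma integral_comp_eq_setIntegral_mul_density {Ω : Type*} [MeasurableSpace Ω] {μ : Measure Ω}
    {W : Ω → ℝ} {f g : ℝ → ℝ} (hW : Measurable W) (hf : AEMeasurable f)
    (hf0 : ∀ v, 0 < v → 0 ≤ f v) (hg : Measurable g)
    (hdist : Measure.map W μ =
      volume.withDensity (fun v => ENNReal.ofReal (if 0 < v then f v else 0))) :
    ∫ ω, g (W ω) ∂μ = ∫ v in Ioi 0, f v * g v := by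
  have hdens : AEMeasurable (fun v => ENNReal.ofReal (if 0 < v then f v else 0)) :=
    (hf.indicator measurableSet_Ioi).ennreal_ofReal
  rw [← integral_map hW.aemeasurable hg.aestronglyMeasurable, hdist,
    integral_withDensity_eq_integral_toReal_smul₀ hdens
      (Filter.Eventually.of_forall fun _ => ENNReal.ofReal_lt_top),
    ← integral_indicator measurableSet_Ioi]
  congr 1
  funext v
  by_cases hv : 0 < v
  · simp [hv, hf0 v hv]
  · simp [hv]

theorem ibgm_moments_general {Ω : Type*} [MeasurableSpace Ω] (μ : Measure Ω)
    (γ : ℕ) (hγ : 1 ≤ γ) (p η β ξ : ℝ) (hp : 0 < p) (hη : 1 < η) (hβ : β < p * γ)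
    (hβk : ∀ k : ℕ, k < γ → β ≠ p * k)
    (W : Ω → ℝ) (hW : Measurable W)
    (hdist : Measure.map W μ =
      MeasureTheory.volume.withDensity
        (fun v => ENNReal.ofReal (if 0 < v then fibgm β γ p η v else 0)))
    (hξ : β - γ * p < ξ) (hξ0 : ξ ≠ 0) (hξk : ∀ k : ℕ, k < γ → ξ ≠ β - p * k) :
    (∫ ω, W ω ^ ξ ∂μ) =
      Real.Gamma (γ + (ξ - β) / p) / (Real.Gamma (γ - β / p) * Cstar β γ p η) *
        ∑ k ∈ Finset.range γ,
          ((γ - 1).choose k : ℝ) * ((-1) ^ k / (p * k - β)) *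
            ((1 - η ^ (-ξ)) / ξ + (1 - η ^ (β - p * k - ξ)) / (β - p * k - ξ)) := by
  obtain ⟨m, rfl⟩ : ∃ m, γ = m + 1 := ⟨γ - 1, by omega⟩
  have hm : ((m + 1 : ℕ) : ℝ) - 1 = m := by push_cast; ring
  have hT : ContinuousOn (incBetaTail p β ((m + 1 : ℕ) - 1)) (Icc 1 η) :=
    hm ▸ continuousOn_incBetaTail_natCast m hη.le
  rw [integral_comp_eq_setIntegral_mul_density (g := (· ^ ξ)) hW
      (aestronglyMeasurable_fibgm hη.le hT).aemeasurable
      (fun v hv => fibgm_nonneg hp hβ hη.le hv.le) (by fun_prop) hdist,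
    setIntegral_fibgm_mul_rpow hp hη.le hξ hT, hm,
    integral_rpow_mul_incBetaTail_natCast m hβk (zero_lt_one.trans hη) hξ0 hξk, Cc,
    Nat.add_sub_cancel]
  field_simp

theorem ibgm_moments {Ω : Type*} [MeasurableSpace Ω] (μ : Measure Ω) [IsProbabilityMeasure μ]
    (γ : ℕ) (hγ : 1 ≤ γ) (p η β ξ : ℝ) (hp : 0 < p) (hη : 1 < η) (hβ : β < p * γ)
    (hβk : ∀ k : ℕ, k < γ → β ≠ p * k)
    (W : Ω → ℝ) (hW : Measurable W)
    (hdist : Measure.map W μ =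
      MeasureTheory.volume.withDensity
        (fun v => ENNReal.ofReal (if 0 < v then fibgm β γ p η v else 0)))
    (hξ : β - γ * p < ξ) (hξ0 : ξ ≠ 0) (hξk : ∀ k : ℕ, k < γ → ξ ≠ β - p * k) :
    (∫ ω, W ω ^ ξ ∂μ) =
      Real.Gamma (γ + (ξ - β) / p) / (Real.Gamma (γ - β / p) * Cstar β γ p η) *
        ∑ k ∈ Finset.range γ,
          ((γ - 1).choose k : ℝ) * ((-1) ^ k / (p * k - β)) *
            ((1 - η ^ (-ξ)) / ξ + (1 - η ^ (β - p * k - ξ)) / (β - p * k - ξ)) :=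
  ibgm_moments_general μ γ hγ p η β ξ hp hη hβ hβk W hW hdist hξ hξ0 hξk
end

section
/- Let γ ∈ {1, 2, 3, …}, p > 0, η > 1 and β ∈ ℝ with β ≠ pk for all k ∈ {0, 1, …, γ-1}. Then for every y ∈ (1, η], ∫_1^y m♯_{β,γ,p,η}(θ) dθ = (1/C*_{β,γ,p,η}) Σ_{k=0}^{γ-1} binom(γ-1, k) (-1)^k [ (pk - β) ln y - 1 + y^{β-pk} ] / (pk - β)^2. In particular, taking y = η gives C*_{β,γ,p,η} = Σ_{k=0}^{γ-1} binom(γ-1, k) (-1)^k [ (pk - β) ln η - 1 + η^{β-pk} ] / (pk - β)^2. -/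
/-!
Expanding `(1 - u ^ p) ^ (γ - 1)` by the binomial theorem turns the inner integrand into a finite
combination of the powers `u ^ (p * k - β - 1)`. Since `p * k - β ≠ 0`, each integrates over
`[1 / θ, 1]` to `(1 - θ ^ (β - p * k)) / (p * k - β)`, and multiplying by `θ⁻¹` and integrating
over `[1, y]` gives the terms `((p * k - β) * log y - 1 + y ^ (β - p * k)) / (p * k - β) ^ 2`.
The value of `C*` is the case `y = η` of the same double integral.
-/

open MeasureTheory Set

open Real intervalIntegral
open scoped Interval

noncomputable def msharpKernel (β γ p θ : ℝ) : ℝ :=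
  ∫ u in (1 / θ)..1, (1 - u ^ p) ^ (γ - 1) * u ^ (-1 - β)

lemma one_sub_rpow_pow_mul_rpow {u : ℝ} (hu : 0 < u) (p a : ℝ) (m : ℕ) :
    (1 - u ^ p) ^ m * u ^ a =
      ∑ k ∈ Finset.range (m + 1), (m.choose k : ℝ) * (-1) ^ k * u ^ (p * k + a) := by
  rw [sub_eq_add_neg, add_comm, add_pow, Finset.sum_mul]
  refine Finset.sum_congr rfl fun k _ => ?_
  rw [rpow_add hu, neg_pow, one_pow, rpow_mul_natCast hu.le]
  ring

lemma integral_one_div_rpow_sub_one {θ e : ℝ} (hθ : 0 < θ) (he : e ≠ 0) :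
    ∫ u in (1 / θ)..1, u ^ (e - 1) = (1 - θ ^ (-e)) / e := by
  rw [integral_rpow (Or.inr ⟨by simpa using he, notMem_uIcc_of_lt (by positivity) one_pos⟩),
    sub_add_cancel, one_rpow, one_div, inv_rpow hθ.le, rpow_neg hθ.le]

lemma integral_inv_mul_one_sub_rpow_neg {y e : ℝ} (hy : 0 < y) (he : e ≠ 0) :
    ∫ θ in (1:ℝ)..y, θ⁻¹ * ((1 - θ ^ (-e)) / e) = (e * log y - 1 + y ^ (-e)) / e ^ 2 := by
  have h0 : (0:ℝ) ∉ [[1, y]] := notMem_uIcc_of_lt one_pos hy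
  have hpos : ∀ θ ∈ [[1, y]], 0 < θ := fun θ hθ =>
    lt_of_lt_of_le (lt_min one_pos hy) hθ.1
  have hsplit : EqOn (fun θ => θ⁻¹ * ((1 - θ ^ (-e)) / e))
      (fun θ => (θ⁻¹ - θ ^ (-e - 1)) / e) [[1, y]] := fun θ hθ => by
    simp only
    rw [rpow_sub_one (hpos θ hθ).ne']
    ring
  rw [integral_congr hsplit, intervalIntegral.integral_div, integral_sub
    (intervalIntegrable_inv (fun θ hθ => (hpos θ hθ).ne') continuousOn_id)
    (intervalIntegrable_rpow (Or.inr h0)), integral_inv h0,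
    integral_rpow (Or.inr ⟨by simpa using he, h0⟩), sub_add_cancel, one_rpow, div_one]
  field_simp
  ring

lemma msharpKernel_eq_sum {γ : ℕ} {p β θ : ℝ} (hγ : 1 ≤ γ)
    (hβ : ∀ k < γ, β ≠ p * k) (hθ : 0 < θ) :
    msharpKernel β γ p θ =
      ∑ k ∈ Finset.range γ,
        ((γ - 1).choose k : ℝ) * (-1) ^ k * ((1 - θ ^ (-(p * k - β))) / (p * k - β)) := by
  have hpos : ∀ u ∈ [[1 / θ, 1]], 0 < u := fun u hu =>
    lt_of_lt_of_le (lt_min (by positivity) one_pos) hu.1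
  have hexponent : (γ : ℝ) - 1 = (γ - 1 : ℕ) := by push_cast [Nat.cast_sub hγ]; ring
  have hexpand : EqOn (fun u => (1 - u ^ p) ^ ((γ : ℝ) - 1) * u ^ (-1 - β))
      (fun u => ∑ k ∈ Finset.range γ,
        ((γ - 1).choose k : ℝ) * (-1) ^ k * u ^ ((p * k - β) - 1)) [[1 / θ, 1]] := fun u hu => by
    simp only [hexponent, rpow_natCast, one_sub_rpow_pow_mul_rpow (hpos u hu),
      Nat.sub_add_cancel hγ]
    ring_nf
  rw [msharpKernel, integral_congr hexpand, integral_finsetSum fun k _ =>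
    (intervalIntegrable_rpow (Or.inr (fun h0 => (hpos 0 h0).false))).const_mul _]
  refine Finset.sum_congr rfl fun k hk => ?_
  have he : p * k - β ≠ 0 := sub_ne_zero.mpr (hβ k (Finset.mem_range.mp hk)).symm
  rw [intervalIntegral.integral_const_mul, integral_one_div_rpow_sub_one hθ he]

lemma integral_inv_mul_msharpKernel {γ : ℕ} {p β y : ℝ} (hγ : 1 ≤ γ)
    (hβ : ∀ k < γ, β ≠ p * k) (hy : 0 < y) :
    ∫ θ in (1:ℝ)..y, θ⁻¹ * msharpKernel β γ p θ =
      ∑ k ∈ Finset.range γ, ((γ - 1).choose k : ℝ) * (-1) ^ k *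
        ((p * k - β) * log y - 1 + y ^ (β - p * k)) / (p * k - β) ^ 2 := by
  have hpos : ∀ θ ∈ [[1, y]], 0 < θ := fun θ hθ =>
    lt_of_lt_of_le (lt_min one_pos hy) hθ.1
  have hinner : EqOn
      (fun θ => θ⁻¹ * msharpKernel β γ p θ)
      (fun θ => ∑ k ∈ Finset.range γ, ((γ - 1).choose k : ℝ) * (-1) ^ k *
        (θ⁻¹ * ((1 - θ ^ (-(p * k - β))) / (p * k - β)))) [[1, y]] := fun θ hθ => by
    simp only [msharpKernel_eq_sum hγ hβ (hpos θ hθ), Finset.mul_sum]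
    ring_nf
  rw [integral_congr hinner, integral_finsetSum fun k _ => ContinuousOn.intervalIntegrable ?_]
  · refine Finset.sum_congr rfl fun k hk => ?_
    have he : p * k - β ≠ 0 := sub_ne_zero.mpr (hβ k (Finset.mem_range.mp hk)).symm
    rw [intervalIntegral.integral_const_mul, integral_inv_mul_one_sub_rpow_neg hy he, neg_sub]
    ring
  · have hne : ∀ θ ∈ [[1, y]], θ ≠ 0 := fun θ hθ => (hpos θ hθ).ne'
    exact ((continuousOn_inv₀.mono hne).mul ((continuousOn_const.sub
      (continuousOn_id.rpow_const fun θ hθ => Or.inl (hne θ hθ))).div_const _)).const_mul _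

theorem msharp_cdf_general (γ : ℕ) (hγ : 1 ≤ γ) (p η β : ℝ) (hη : 1 < η)
    (hβ : ∀ k : ℕ, k < γ → β ≠ p * k) :
    (∀ y ∈ Ioc (1:ℝ) η,
      (∫ θ in (1:ℝ)..y, msharp β γ p η θ) =
        (Cstar β γ p η)⁻¹ *
          ∑ k ∈ Finset.range γ,
            ((γ - 1).choose k : ℝ) * (-1) ^ k *
              ((p * k - β) * Real.log y - 1 + y ^ (β - p * k)) / (p * k - β) ^ 2) ∧
    Cstar β γ p η =
      ∑ k ∈ Finset.range γ,
        ((γ - 1).choose k : ℝ) * (-1) ^ k *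
          ((p * k - β) * Real.log η - 1 + η ^ (β - p * k)) / (p * k - β) ^ 2 := by
  have hcdf := fun y (hy : 0 < y) => integral_inv_mul_msharpKernel hγ hβ hy
  refine ⟨fun y hy => ?_, hcdf η (by linarith)⟩
  rw [← hcdf y (by linarith [hy.1])]
  simp only [msharp, msharpKernel, mul_assoc, intervalIntegral.integral_const_mul]

theorem msharp_cdf (γ : ℕ) (hγ : 1 ≤ γ) (p η β : ℝ) (hp : 0 < p) (hη : 1 < η)
    (hβ : ∀ k : ℕ, k < γ → β ≠ p * k) :
    (∀ y ∈ Ioc (1:ℝ) η,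
      (∫ θ in (1:ℝ)..y, msharp β γ p η θ) =
        (Cstar β γ p η)⁻¹ *
          ∑ k ∈ Finset.range γ,
            ((γ - 1).choose k : ℝ) * (-1) ^ k *
              ((p * k - β) * Real.log y - 1 + y ^ (β - p * k)) / (p * k - β) ^ 2) ∧
    Cstar β γ p η =
      ∑ k ∈ Finset.range γ,
        ((γ - 1).choose k : ℝ) * (-1) ^ k *
          ((p * k - β) * Real.log η - 1 + η ^ (β - p * k)) / (p * k - β) ^ 2 :=
  msharp_cdf_general γ hγ p η β hη hβ
end
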